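/- arXiv:1402.3277 — 4 statements merged into one kernel-verified Lean document; each statement's English description precedes it below -/
import Mathlib

section
/- Let α: A⁺ → S be a semigroup morphism into a finite semigroup S, let 𝐊 be a finite partition of A⁺, and let L₁ = α⁻¹(T₁) and L₂ = α⁻¹(T₂) be languages recognized by α with accepting sets T₁, T₂ ⊆ S. Then the following are equivalent: (1) for all t₁ ∈ T₁ and t₂ ∈ T₂, {t₁, t₂} ∉ I[α](𝐊); (2) L₁ and L₂ can be separated by a union of blocks of 𝐊 (i.e., there is a subfamily of 𝐊 whose union K satisfies L₁ ⊆ K and K ∩ L₂ = ∅). -/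
open Pointwise

namespace FOSep

/-- First-order formulas over alphabet `A`, with variables indexed by `ℕ`:
atomic formulas are `a(x)` for letters `a` and `x < y`; connectives are
negation, conjunction and existential quantification. -/
inductive Form (A : Type) : Type
  | letter : A → ℕ → Form A
  | lt : ℕ → ℕ → Form A
  | not : Form A → Form A
  | and : Form A → Form A → Form A
  | ex : ℕ → Form A → Form A

namespace Form

/-- Quantifier rank: maximal nesting depth of quantifiers. -/
def rank {A : Type} : Form A → ℕ
  | letter _ _ => 0
  | lt _ _ => 0
  | not φ => rank φ
  | and φ ψ => max (rank φ) (rank ψ)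
  | ex _ φ => rank φ + 1

/-- Free variables of a formula. -/
def freeVars {A : Type} : Form A → Finset ℕ
  | letter _ i => {i}
  | lt i j => {i, j}
  | not φ => freeVars φ
  | and φ ψ => freeVars φ ∪ freeVars ψ
  | ex n φ => freeVars φ \ {n}

end Form

/-- A sentence is a formula without free variables. -/
def IsSentence {A : Type} (φ : Form A) : Prop := φ.freeVars = ∅

/-- Satisfaction of a formula in a finite word (a list of letters, whose
positions are ordered by `<`), under an assignment of variables to positions. -/
def Interp {A : Type} (w : List A) : Form A → (ℕ → Fin w.length) → Prop
  | .letter a i, v => w.get (v i) = a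
  | .lt i j, v => (v i : ℕ) < (v j : ℕ)
  | .not φ, v => ¬ Interp w φ v
  | .and φ ψ, v => Interp w φ v ∧ Interp w ψ v
  | .ex n φ, v => ∃ p : Fin w.length, Interp w φ (Function.update v n p)

/-- The underlying (nonempty) list of letters of a nonempty word. -/
def wordList {A : Type} (w : FreeSemigroup A) : List A := w.head :: w.tail

/-- A nonempty word satisfies a formula if every assignment satisfies it;
for sentences this is the usual notion of satisfaction. -/
def Models {A : Type} (w : FreeSemigroup A) (φ : Form A) : Prop :=
  ∀ v : ℕ → Fin (wordList w).length, Interp (wordList w) φ v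

/-- The language of words of `A⁺` satisfying `φ`. -/
def LangOf {A : Type} (φ : Form A) : Set (FreeSemigroup A) := { w | Models w φ }

/-- A language `L ⊆ A⁺` is FO-definable if it is the language of some sentence. -/
def FODefinable {A : Type} (L : Set (FreeSemigroup A)) : Prop :=
  ∃ φ : Form A, IsSentence φ ∧ L = LangOf φ

/-- `w ≡_k w'`: the two words satisfy the same sentences of quantifier
rank at most `k`. -/
def EquivK {A : Type} (k : ℕ) (w w' : FreeSemigroup A) : Prop :=
  ∀ φ : Form A, IsSentence φ → φ.rank ≤ k → (Models w φ ↔ Models w' φ)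

/-- A finite partition of `X`: finitely many blocks, and every element lies
in exactly one block. -/
def FinPart {X : Type} (P : Set (Set X)) : Prop :=
  P.Finite ∧ ∀ x : X, ∃! B, B ∈ P ∧ x ∈ B

/-- An FO-partition: a finite partition all of whose blocks are FO-definable. -/
def FOPart {A : Type} (P : Set (Set (FreeSemigroup A))) : Prop :=
  FinPart P ∧ ∀ B ∈ P, FODefinable B

/-- `K` separates `L₀` from `L₁`. -/
def Separates {X : Type} (K L₀ L₁ : Set X) : Prop :=
  L₀ ⊆ K ∧ K ∩ L₁ = ∅

/-- `L₀` and `L₁` are separable by an FO-definable language. -/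
def FOSeparable {A : Type} (L₀ L₁ : Set (FreeSemigroup A)) : Prop :=
  ∃ K : Set (FreeSemigroup A), FODefinable K ∧ Separates K L₀ L₁

/-- The imprint of a finite partition `P` on a morphism `α`:
the sets `T ⊆ S` contained in the image of some block. -/
def imprint {A S : Type} [Semigroup S] (α : FreeSemigroup A →ₙ* S)
    (P : Set (Set (FreeSemigroup A))) : Set (Set S) :=
  { T | ∃ K ∈ P, T ⊆ ⇑α '' K }

/-- The optimal FO-imprint of `α`: the intersection of the imprints of all
FO-partitions. -/
def optImprintFO {A S : Type} [Semigroup S] (α : FreeSemigroup A →ₙ* S) :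
    Set (Set S) :=
  { T | ∀ P : Set (Set (FreeSemigroup A)), FOPart P → T ∈ imprint α P }

/-- Powers in a semigroup: `spow x n = x^(n+1)`. -/
def spow {M : Type} [Semigroup M] (x : M) : ℕ → M
  | 0 => x
  | n + 1 => spow x n * x

/-- `X ⊆ 2^S` contains `𝕊` and is closed under downset, products, and the
FO-operation `T ↦ T^ω ∪ T^(ω+1)` (phrased via idempotent powers: in a finite
semigroup, `T^ω` is the unique idempotent power of `T`). -/
def SatClosed {S : Type} [Semigroup S] (𝕊 X : Set (Set S)) : Prop :=
  𝕊 ⊆ X ∧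
  (∀ T ∈ X, ∀ T' : Set S, T' ⊆ T → T' ∈ X) ∧
  (∀ T ∈ X, ∀ T' ∈ X, T * T' ∈ X) ∧
  (∀ T ∈ X, ∀ n : ℕ, spow T n * spow T n = spow T n →
      spow T n ∪ spow T n * T ∈ X)

/-- `Sat 𝕊`: the smallest subset of `2^S` containing `𝕊` that is closed under
downset, products and the FO-operation. -/
def Sat {S : Type} [Semigroup S] (𝕊 : Set (Set S)) : Set (Set S) :=
  ⋂₀ { X | SatClosed 𝕊 X }

/-- `Sat α = Sat({{α(w)} | w ∈ A⁺})`. -/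
def SatM {A S : Type} [Semigroup S] (α : FreeSemigroup A →ₙ* S) : Set (Set S) :=
  Sat { T | ∃ w : FreeSemigroup A, T = {α w} }

/-- Left quotient `w⁻¹L`. -/
def QuotL {A : Type} (w : FreeSemigroup A) (L : Set (FreeSemigroup A)) :
    Set (FreeSemigroup A) := { u | w * u ∈ L }

/-- Right quotient `Lw⁻¹`. -/
def QuotR {A : Type} (w : FreeSemigroup A) (L : Set (FreeSemigroup A)) :
    Set (FreeSemigroup A) := { u | u * w ∈ L }

/-- A language is regular if it is recognized by a morphism into a finite
semigroup. -/
def Regular {A : Type} (L : Set (FreeSemigroup A)) : Prop :=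
  ∃ (S : Type) (_ : Semigroup S) (_ : Fintype S)
    (β : FreeSemigroup A →ₙ* S) (F : Set S), L = ⇑β ⁻¹' F

/-- A class of languages that is nonempty, closed under Boolean operations and
under left/right quotients by words, and contains only regular languages. -/
def GoodClass {A : Type} (C : Set (Set (FreeSemigroup A))) : Prop :=
  C.Nonempty ∧
  (∀ L ∈ C, ∀ L' ∈ C, L ∪ L' ∈ C) ∧
  (∀ L ∈ C, ∀ L' ∈ C, L ∩ L' ∈ C) ∧
  (∀ L ∈ C, Lᶜ ∈ C) ∧
  (∀ L ∈ C, ∀ w : FreeSemigroup A, QuotL w L ∈ C ∧ QuotR w L ∈ C) ∧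
  (∀ L ∈ C, Regular L)

/-- A C-partition: a finite partition all of whose blocks belong to `C`. -/
def CPart {A : Type} (C : Set (Set (FreeSemigroup A)))
    (P : Set (Set (FreeSemigroup A))) : Prop :=
  FinPart P ∧ ∀ B ∈ P, B ∈ C

/-- The optimal imprint with respect to a class `C`: the intersection of the
imprints of all C-partitions. -/
def optImprint {A S : Type} [Semigroup S] (C : Set (Set (FreeSemigroup A)))
    (α : FreeSemigroup A →ₙ* S) : Set (Set S) :=
  { T | ∀ P : Set (Set (FreeSemigroup A)), CPart C P → T ∈ imprint α P }

/-- A subset of a semigroup that is a subsemigroup and a group under the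
induced product. -/
def IsGroupSet {M : Type} [Semigroup M] (G : Set M) : Prop :=
  (∀ x ∈ G, ∀ y ∈ G, x * y ∈ G) ∧
  ∃ e ∈ G, (∀ x ∈ G, e * x = x ∧ x * e = x) ∧
    ∀ x ∈ G, ∃ y ∈ G, x * y = e ∧ y * x = e

/-- Aperiodicity: `s^ω = s^(ω+1)` for every `s` (phrased via idempotent powers). -/
def Aperiodic (S : Type) [Semigroup S] : Prop :=
  ∀ s : S, ∀ n : ℕ, spow s n * spow s n = spow s n → spow s n = spow s n * s

/-- Green's `H`-equivalence relative to a subsemigroup `X` of `M`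
(with witnesses taken in `X`). -/
def HEquivIn {M : Type} [Semigroup M] (X : Set M) (s s' : M) : Prop :=
  s = s' ∨ ((∃ t ∈ X, s * t = s') ∧ (∃ t ∈ X, s' * t = s) ∧
            (∃ t ∈ X, t * s = s') ∧ (∃ t ∈ X, t * s' = s))

/-- `H` is an `H`-class of the semigroup `X`. -/
def IsHClassIn {M : Type} [Semigroup M] (X : Set M) (H : Set M) : Prop :=
  ∃ s ∈ X, H = { s' ∈ X | HEquivIn X s s' }

/-- Closure conditions for `Sat_G`. -/
def SatGClosed {S : Type} [Semigroup S] (𝕊 X : Set (Set S)) : Prop :=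
  𝕊 ⊆ X ∧
  (∀ T ∈ X, ∀ T' : Set S, T' ⊆ T → T' ∈ X) ∧
  (∀ T ∈ X, ∀ T' ∈ X, T * T' ∈ X) ∧
  (∀ 𝔾 : Set (Set S), 𝔾 ⊆ X → IsGroupSet 𝔾 → ⋃₀ 𝔾 ∈ X)

/-- `Sat_G 𝕊`: the smallest subset of `2^S` containing `𝕊` closed under downset,
products, and unions of groups. -/
def SatG {S : Type} [Semigroup S] (𝕊 : Set (Set S)) : Set (Set S) :=
  ⋂₀ { X | SatGClosed 𝕊 X }

/-- Closure conditions for `Sat_H`. -/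
def SatHClosed {S : Type} [Semigroup S] (𝕊 X : Set (Set S)) : Prop :=
  𝕊 ⊆ X ∧
  (∀ T ∈ X, ∀ T' : Set S, T' ⊆ T → T' ∈ X) ∧
  (∀ T ∈ X, ∀ T' ∈ X, T * T' ∈ X) ∧
  (∀ H : Set (Set S), IsHClassIn X H → ⋃₀ H ∈ X)

/-- `Sat_H 𝕊`: the smallest subset of `2^S` containing `𝕊` closed under downset,
products, and unions of `H`-classes. -/
def SatH {S : Type} [Semigroup S] (𝕊 : Set (Set S)) : Set (Set S) :=
  ⋂₀ { X | SatHClosed 𝕊 X }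

/-! ### Infinite words -/

/-- Satisfaction of a formula in an ω-word (a function `ℕ → A`), under an
assignment of variables to positions. -/
def InterpInf {A : Type} (w : ℕ → A) : Form A → (ℕ → ℕ) → Prop
  | .letter a i, v => w (v i) = a
  | .lt i j, v => v i < v j
  | .not φ, v => ¬ InterpInf w φ v
  | .and φ ψ, v => InterpInf w φ v ∧ InterpInf w ψ v
  | .ex n φ, v => ∃ p : ℕ, InterpInf w φ (Function.update v n p)

/-- An ω-word satisfies a formula if every assignment satisfies it; for
sentences this is the usual notion of satisfaction. -/
def ModelsInf {A : Type} (w : ℕ → A) (φ : Form A) : Prop :=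
  ∀ v : ℕ → ℕ, InterpInf w φ v

/-- The ω-language of ω-words satisfying `φ`. -/
def LangOfInf {A : Type} (φ : Form A) : Set (ℕ → A) := { w | ModelsInf w φ }

/-- An ω-language is FO-definable if it is the ω-language of some sentence. -/
def FODefinableInf {A : Type} (L : Set (ℕ → A)) : Prop :=
  ∃ φ : Form A, IsSentence φ ∧ L = LangOfInf φ

/-- `w ≡_k w'` for ω-words. -/
def EquivKInf {A : Type} (k : ℕ) (w w' : ℕ → A) : Prop :=
  ∀ φ : Form A, IsSentence φ → φ.rank ≤ k → (ModelsInf w φ ↔ ModelsInf w' φ)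

/-- An FO-partition of `A^∞`. -/
def FOPartInf {A : Type} (P : Set (Set (ℕ → A))) : Prop :=
  FinPart P ∧ ∀ B ∈ P, FODefinableInf B

/-- The imprint of a finite partition of `A^∞` on a map `α : A^∞ → Sinf`. -/
def imprintInf {A Sinf : Type} (α : (ℕ → A) → Sinf) (P : Set (Set (ℕ → A))) :
    Set (Set Sinf) :=
  { T | ∃ K ∈ P, T ⊆ α '' K }

/-- A C-partition of `A^∞`. -/
def CPartInf {A : Type} (C : Set (Set (ℕ → A))) (P : Set (Set (ℕ → A))) : Prop :=
  FinPart P ∧ ∀ B ∈ P, B ∈ C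

/-- The optimal imprint on `α : A^∞ → Sinf` with respect to a class `C` of
ω-languages. -/
def optImprintInf {A Sinf : Type} (C : Set (Set (ℕ → A))) (α : (ℕ → A) → Sinf) :
    Set (Set Sinf) :=
  { T | ∀ P : Set (Set (ℕ → A)), CPartInf C P → T ∈ imprintInf α P }

/-- The optimal FO-imprint on `α : A^∞ → Sinf`. -/
def optImprintFOInf {A Sinf : Type} (α : (ℕ → A) → Sinf) : Set (Set Sinf) :=
  { T | ∀ P : Set (Set (ℕ → A)), FOPartInf P → T ∈ imprintInf α P }

/-- Concatenation of a finite word and an ω-word. -/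
def catInf {A : Type} (u : FreeSemigroup A) (x : ℕ → A) : ℕ → A :=
  fun n =>
    if h : n < (wordList u).length then (wordList u).get ⟨n, h⟩
    else x (n - (wordList u).length)

/-- The separator, when one exists, can be taken to be the union of the blocks meeting `L₁`. -/
theorem exists_sUnion_separates_iff {X : Type} {P : Set (Set X)}
    (hP : ∀ x : X, ∃! B, B ∈ P ∧ x ∈ B) {L₁ L₂ : Set X} :
    (∃ Q ⊆ P, Separates (⋃₀ Q) L₁ L₂) ↔
      ∀ K ∈ P, ¬ ((K ∩ L₁).Nonempty ∧ (K ∩ L₂).Nonempty) := by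
  constructor
  · rintro ⟨Q, hQP, hL₁, hL₂⟩ K hK ⟨⟨u, huK, huL₁⟩, ⟨w, hwK, hwL₂⟩⟩
    obtain ⟨B, hBQ, huB⟩ := hL₁ huL₁
    have hBK : B = K := (hP u).unique ⟨hQP hBQ, huB⟩ ⟨hK, huK⟩
    have hw : w ∈ ⋃₀ Q ∩ L₂ := ⟨⟨B, hBQ, hBK ▸ hwK⟩, hwL₂⟩
    rwa [hL₂] at hw
  · intro h
    refine ⟨{K ∈ P | (K ∩ L₁).Nonempty}, fun K hK => hK.1, fun u hu => ?_, ?_⟩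
    · obtain ⟨B, ⟨hBP, huB⟩, -⟩ := hP u
      exact ⟨B, ⟨hBP, u, huB, hu⟩, huB⟩
    · refine Set.eq_empty_of_forall_notMem ?_
      rintro w ⟨⟨K, ⟨hKP, hK₁⟩, hwK⟩, hwL₂⟩
      exact h K hKP ⟨hK₁, w, hwK, hwL₂⟩

theorem pair_mem_imprint_iff {A S : Type} [Semigroup S] (α : FreeSemigroup A →ₙ* S)
    (P : Set (Set (FreeSemigroup A))) (t₁ t₂ : S) :
    ({t₁, t₂} : Set S) ∈ imprint α P ↔
      ∃ K ∈ P, (K ∩ α ⁻¹' {t₁}).Nonempty ∧ (K ∩ α ⁻¹' {t₂}).Nonempty := by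
  simp only [imprint, Set.mem_ofPred_eq, Set.insert_subset_iff, Set.singleton_subset_iff,
    Set.mem_image, Set.Nonempty, Set.mem_inter_iff, Set.mem_preimage, Set.mem_singleton_iff]

theorem forall_pair_notMem_imprint_iff {A S : Type} [Semigroup S]
    (α : FreeSemigroup A →ₙ* S) (P : Set (Set (FreeSemigroup A))) (T₁ T₂ : Set S) :
    (∀ t₁ ∈ T₁, ∀ t₂ ∈ T₂, ({t₁, t₂} : Set S) ∉ imprint α P) ↔
      ∀ K ∈ P, ¬ ((K ∩ α ⁻¹' T₁).Nonempty ∧ (K ∩ α ⁻¹' T₂).Nonempty) := by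
  simp only [pair_mem_imprint_iff, Set.Nonempty, Set.mem_inter_iff, Set.mem_preimage,
    Set.mem_singleton_iff]
  grind

theorem stmt2_general {A S : Type} [Semigroup S]
    (α : FreeSemigroup A →ₙ* S) (P : Set (Set (FreeSemigroup A)))
    (hP : FinPart P) (T₁ T₂ : Set S) :
    (∀ t₁ ∈ T₁, ∀ t₂ ∈ T₂, ({t₁, t₂} : Set S) ∉ imprint α P) ↔
      ∃ Q ⊆ P, Separates (⋃₀ Q) (⇑α ⁻¹' T₁) (⇑α ⁻¹' T₂) :=
  (forall_pair_notMem_imprint_iff α P T₁ T₂).trans (exists_sUnion_separates_iff hP.2).symm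

theorem stmt2 {A S : Type} [Fintype A] [Semigroup S] [Fintype S]
    (α : FreeSemigroup A →ₙ* S) (P : Set (Set (FreeSemigroup A)))
    (hP : FinPart P) (T₁ T₂ : Set S) :
    (∀ t₁ ∈ T₁, ∀ t₂ ∈ T₂, ({t₁, t₂} : Set S) ∉ imprint α P) ↔
      ∃ Q ⊆ P, Separates (⋃₀ Q) (⇑α ⁻¹' T₁) (⇑α ⁻¹' T₂) :=
  stmt2_general α P hP T₁ T₂

end FOSep
end

section
/- Let C be a class of languages over a finite alphabet A that is nonempty and closed under Boolean operations, closed under left and right quotients by words, and contains only regular languages, and let α: A⁺ → S be a semigroup morphism into a finite semigroup S. Then there exists a C-partition 𝐊 of A⁺ that is optimal for α, i.e., such that I[α](𝐊) ⊆ I[α](𝐊') for every C-partition 𝐊' of A⁺. -/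
open Pointwise

namespace FOSep

/-! Common refinements of C-partitions are C-partitions whose imprint lies in both imprints, so
the (finitely many) imprints of C-partitions form a downward directed family; a minimal one
is therefore least. -/

section Refinement

variable {X : Type}

def commonRefinement (P₁ P₂ : Set (Set X)) : Set (Set X) :=
  (fun B : Set X × Set X => B.1 ∩ B.2) '' (P₁ ×ˢ P₂)

lemma FinPart.commonRefinement {P₁ P₂ : Set (Set X)} (h₁ : FinPart P₁) (h₂ : FinPart P₂) :
    FinPart (commonRefinement P₁ P₂) := by
  refine ⟨(h₁.1.prod h₂.1).image _, fun x => ?_⟩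
  obtain ⟨B₁, ⟨hB₁, hx₁⟩, huniq₁⟩ := h₁.2 x
  obtain ⟨B₂, ⟨hB₂, hx₂⟩, huniq₂⟩ := h₂.2 x
  refine ⟨B₁ ∩ B₂, ⟨⟨(B₁, B₂), ⟨hB₁, hB₂⟩, rfl⟩, hx₁, hx₂⟩, ?_⟩
  rintro _ ⟨⟨⟨K₁, K₂⟩, ⟨hK₁, hK₂⟩, rfl⟩, hx⟩
  rw [huniq₁ K₁ ⟨hK₁, hx.1⟩, huniq₂ K₂ ⟨hK₂, hx.2⟩]

lemma exists_mem_superset_of_mem_commonRefinement {P₁ P₂ : Set (Set X)} {K : Set X}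
    (hK : K ∈ commonRefinement P₁ P₂) : (∃ B ∈ P₁, K ⊆ B) ∧ ∃ B ∈ P₂, K ⊆ B := by
  obtain ⟨⟨B₁, B₂⟩, ⟨hB₁, hB₂⟩, rfl⟩ := hK
  exact ⟨⟨B₁, hB₁, Set.inter_subset_left⟩, B₂, hB₂, Set.inter_subset_right⟩

end Refinement

section CPartition

variable {A : Type} {C : Set (Set (FreeSemigroup A))}

lemma GoodClass.univ_mem (hC : GoodClass C) : Set.univ ∈ C := by
  obtain ⟨L, hL⟩ := hC.1
  simpa using hC.2.1 L hL Lᶜ (hC.2.2.2.1 L hL)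

lemma cPart_singleton_univ (hC : Set.univ ∈ C) : CPart C {Set.univ} := by
  refine ⟨⟨Set.finite_singleton _, fun x => ⟨Set.univ, ⟨rfl, trivial⟩, fun B hB => hB.1⟩⟩, ?_⟩
  rintro B rfl
  exact hC

lemma CPart.commonRefinement (hC : ∀ L ∈ C, ∀ L' ∈ C, L ∩ L' ∈ C)
    {P₁ P₂ : Set (Set (FreeSemigroup A))} (h₁ : CPart C P₁) (h₂ : CPart C P₂) : CPart C (commonRefinement P₁ P₂) := by
  refine ⟨h₁.1.commonRefinement h₂.1, ?_⟩
  rintro _ ⟨⟨B₁, B₂⟩, ⟨hB₁, hB₂⟩, rfl⟩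
  exact hC B₁ (h₁.2 B₁ hB₁) B₂ (h₂.2 B₂ hB₂)

variable {S : Type} [Semigroup S] (α : FreeSemigroup A →ₙ* S)

lemma imprint_mono_of_refines {P Q : Set (Set (FreeSemigroup A))}
    (hQP : ∀ K ∈ Q, ∃ B ∈ P, K ⊆ B) : imprint α Q ⊆ imprint α P := by
  rintro T ⟨K, hK, hT⟩
  obtain ⟨B, hB, hKB⟩ := hQP K hK
  exact ⟨B, hB, hT.trans (Set.image_mono hKB)⟩

lemma directedOn_imprint_cPart (hC : ∀ L ∈ C, ∀ L' ∈ C, L ∩ L' ∈ C) :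
    DirectedOn (fun J J' => J' ≤ J) (imprint α '' {P | CPart C P}) := by
  rintro _ ⟨P₁, h₁, rfl⟩ _ ⟨P₂, h₂, rfl⟩
  refine ⟨_, ⟨_, h₁.commonRefinement hC h₂, rfl⟩, ?_, ?_⟩ <;>
    refine imprint_mono_of_refines α fun K hK => ?_
  exacts [(exists_mem_superset_of_mem_commonRefinement hK).1,
    (exists_mem_superset_of_mem_commonRefinement hK).2]

end CPartition

theorem stmt3_general {A S : Type} [Semigroup S] [Fintype S]
    (C : Set (Set (FreeSemigroup A))) (hC : GoodClass C)
    (α : FreeSemigroup A →ₙ* S) :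
    ∃ P : Set (Set (FreeSemigroup A)), CPart C P ∧
      ∀ P' : Set (Set (FreeSemigroup A)), CPart C P' →
        imprint α P ⊆ imprint α P' := by
  obtain ⟨J, hJ⟩ := (imprint α '' {P | CPart C P}).toFinite.exists_minimal
    ⟨_, _, cPart_singleton_univ hC.univ_mem, rfl⟩
  obtain ⟨P, hP, rfl⟩ := hJ.1
  exact ⟨P, hP, fun P' hP' =>
    (directedOn_imprint_cPart α hC.2.2.1).le_of_minimal hJ ⟨P', hP', rfl⟩⟩

theorem stmt3 {A S : Type} [Fintype A] [Semigroup S] [Fintype S]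
    (C : Set (Set (FreeSemigroup A))) (hC : GoodClass C)
    (α : FreeSemigroup A →ₙ* S) :
    ∃ P : Set (Set (FreeSemigroup A)), CPart C P ∧
      ∀ P' : Set (Set (FreeSemigroup A)), CPart C P' →
        imprint α P ⊆ imprint α P' :=
  stmt3_general C hC α

end FOSep
end

section
/- Let C be a class of languages over a finite alphabet A that is nonempty and closed under Boolean operations, closed under left and right quotients by words, and contains only regular languages, and let α: A⁺ → S be a semigroup morphism into a finite semigroup S. Then the optimal imprint I_C[α] is a subsemigroup of 2^S: for all R, T ∈ I_C[α], the product R·T = {rt | r ∈ R, t ∈ T} belongs to I_C[α]. -/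
open Pointwise

namespace FOSep

/-! Given a C-partition `P`, group the words `u` by their left quotients `u⁻¹K`, `K ∈ P`.
This is again a C-partition: a regular language has finitely many left quotients, and whether
`u'⁻¹K = u⁻¹K` is decided by finitely many test words `w`, i.e. by membership in the right
quotients `Kw⁻¹`. If `R` lies in the image of the class of `u₀` and `T` in the image of a block
`u₀⁻¹K` of the C-partition `{u₀⁻¹K | K ∈ P}`, then every `u` of that class has `u⁻¹K = u₀⁻¹K`,
so `R * T` lies in the image of `K`. -/

theorem FinPart.image_preimage {X Y : Type} {P : Set (Set Y)} (hP : FinPart P) (g : X → Y) :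
    FinPart ((g ⁻¹' ·) '' P) := by
  refine ⟨hP.1.image _, fun x => ?_⟩
  obtain ⟨K, ⟨hKP, hxK⟩, hK⟩ := hP.2 (g x)
  refine ⟨g ⁻¹' K, ⟨⟨K, hKP, rfl⟩, hxK⟩, ?_⟩
  rintro _ ⟨⟨K', hK'P, rfl⟩, hxK'⟩
  rw [hK K' ⟨hK'P, hxK'⟩]

theorem finPart_classes {X : Type} (r : Setoid X) (hr : r.classes.Finite) : FinPart r.classes :=
  ⟨hr, Setoid.classes_eqv_classes⟩

theorem finite_classes_ker_of_finite_range {X Y : Type} (f : X → Y)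
    (hf : (Set.range f).Finite) : (Setoid.ker f).classes.Finite := by
  refine (hf.image fun y => {x | f x = y}).subset ?_
  rintro _ ⟨x, rfl⟩
  exact ⟨f x, ⟨x, rfl⟩, rfl⟩

section

variable {A : Type}

theorem Regular.finite_range_quotL {K : Set (FreeSemigroup A)} (hK : Regular K) :
    (Set.range fun u => QuotL u K).Finite := by
  obtain ⟨S, _, _, β, F, rfl⟩ := hK
  refine (Set.finite_range fun t : S => β ⁻¹' {s | t * s ∈ F}).subset ?_
  rintro _ ⟨u, rfl⟩
  exact ⟨β u, by ext w; simp [QuotL, map_mul]⟩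

theorem Regular.exists_finite_test_words {K : Set (FreeSemigroup A)} (hK : Regular K) :
    ∃ W : Set (FreeSemigroup A), W.Finite ∧ ∀ u u' : FreeSemigroup A,
      (∀ w ∈ W, u * w ∈ K ↔ u' * w ∈ K) → QuotL u K = QuotL u' K := by
  obtain ⟨S, _, _, β, F, rfl⟩ := hK
  choose rep hrep using fun s : Set.range β => s.2
  refine ⟨Set.range rep, Set.finite_range rep, fun u u' h => ?_⟩
  ext w
  simpa [QuotL, map_mul, hrep] using h (rep ⟨β w, w, rfl⟩) ⟨_, rfl⟩

namespace GoodClass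

variable {C : Set (Set (FreeSemigroup A))}

theorem univ_mem_s4 (hC : GoodClass C) : Set.univ ∈ C := by
  obtain ⟨L, hL⟩ := hC.1
  simpa using hC.2.1 L hL Lᶜ (hC.2.2.2.1 L hL)

theorem iInter_mem (hC : GoodClass C) {ι : Type} [Finite ι] {g : ι → Set (FreeSemigroup A)}
    (hg : ∀ i, g i ∈ C) : ⋂ i, g i ∈ C := by
  have := Fintype.ofFinite ι
  rw [← Set.iInf_eq_iInter, ← Finset.inf_univ_eq_iInf]
  exact Finset.inf_mem C hC.univ_mem_s4 hC.2.2.1 _ _ fun i _ => hg i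

theorem setOf_quotL_eq_mem (hC : GoodClass C) {K : Set (FreeSemigroup A)} (hK : K ∈ C)
    (u : FreeSemigroup A) : {u' | QuotL u' K = QuotL u K} ∈ C := by
  obtain ⟨W, hW, hWK⟩ := (hC.2.2.2.2.2 K hK).exists_finite_test_words
  have := hW.to_subtype
  have htest : {u' | QuotL u' K = QuotL u K} =
      ⋂ w : W, {u' | u' * (w : FreeSemigroup A) ∈ K ↔ u * (w : FreeSemigroup A) ∈ K} := by
    ext u'
    simp only [Set.mem_ofPred_eq, Set.mem_iInter]
    exact ⟨fun h w => Set.ext_iff.mp h w, fun h => hWK u' u fun w hw => h ⟨w, hw⟩⟩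
  rw [htest]
  refine hC.iInter_mem fun w => ?_
  have hQuotR := (hC.2.2.2.2.1 K hK w).2
  by_cases hw : u * w ∈ K
  · simpa [hw, QuotR] using hQuotR
  · simpa [hw, QuotR, Set.compl_ofPred] using hC.2.2.2.1 _ hQuotR

end GoodClass

def quotLProfile (P : Set (Set (FreeSemigroup A))) (u : FreeSemigroup A) :
    P → Set (FreeSemigroup A) :=
  fun K => QuotL u K

namespace CPart

variable {C P : Set (Set (FreeSemigroup A))}

theorem image_quotL (hC : GoodClass C) (hP : CPart C P) (u : FreeSemigroup A) :
    CPart C (QuotL u '' P) := by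
  refine ⟨hP.1.image_preimage (u * ·), ?_⟩
  rintro _ ⟨K, hK, rfl⟩
  exact (hC.2.2.2.2.1 K (hP.2 K hK) u).1

theorem classes_ker_quotLProfile (hC : GoodClass C) (hP : CPart C P) :
    CPart C (Setoid.ker (quotLProfile P)).classes := by
  have := hP.1.1.to_subtype
  refine ⟨finPart_classes _ (finite_classes_ker_of_finite_range _ ?_), ?_⟩
  · refine (Set.Finite.pi (t := fun K : P => Set.range fun u => QuotL u K) fun K =>
      (hC.2.2.2.2.2 K (hP.2 K K.2)).finite_range_quotL).subset ?_
    rintro _ ⟨u, rfl⟩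
    exact Set.mem_univ_pi.mpr fun K => ⟨u, rfl⟩
  · rintro _ ⟨u, rfl⟩
    have hclass : {u' | Setoid.ker (quotLProfile P) u' u} =
        ⋂ K : P, {u' | QuotL u' K = QuotL u K} := by
      ext u'
      simp [Setoid.ker_def, quotLProfile, funext_iff]
    rw [hclass]
    exact hC.iInter_mem fun K => hC.setOf_quotL_eq_mem (hP.2 K K.2) u

end CPart

end

theorem stmt4_general {A S : Type} [Semigroup S]
    (C : Set (Set (FreeSemigroup A))) (hC : GoodClass C)
    (α : FreeSemigroup A →ₙ* S) :
    ∀ R ∈ optImprint C α, ∀ T ∈ optImprint C α, R * T ∈ optImprint C α := by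
  intro R hR T hT P hP
  obtain ⟨_, ⟨u₀, rfl⟩, hRu₀⟩ := hR _ (hP.classes_ker_quotLProfile hC)
  obtain ⟨_, ⟨K, hKP, rfl⟩, hTK⟩ := hT _ (hP.image_quotL hC u₀)
  refine ⟨K, hKP, ?_⟩
  rintro _ ⟨_, hr, _, ht, rfl⟩
  obtain ⟨u, hu, rfl⟩ := hRu₀ hr
  obtain ⟨w, hw, rfl⟩ := hTK ht
  have hquot : QuotL u K = QuotL u₀ K := congrFun hu ⟨K, hKP⟩
  exact ⟨u * w, (Set.ext_iff.mp hquot w).mpr hw, map_mul α u w⟩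

theorem stmt4 {A S : Type} [Fintype A] [Semigroup S] [Fintype S]
    (C : Set (Set (FreeSemigroup A))) (hC : GoodClass C)
    (α : FreeSemigroup A →ₙ* S) :
    ∀ R ∈ optImprint C α, ∀ T ∈ optImprint C α, R * T ∈ optImprint C α :=
  stmt4_general C hC α

end FOSep
end

section
/- (Schützenberger's Theorem) Let A be a finite alphabet and let L ⊆ A⁺ be a regular language. Then L is FO-definable if and only if L is recognized by a semigroup morphism α: A⁺ → S into a finite aperiodic semigroup S, i.e., a finite semigroup in which every element s satisfies s^ω = s^{ω+1}. -/
open Pointwise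

namespace FOSep

/-!
FO-definable ⇒ aperiodic. By an Ehrenfeucht–Fraïssé argument, `u^n` and `u^(n+1)` satisfy the
same sentences of quantifier rank `k`, in every context, as soon as `n ≥ 3^k`. Hence the
syntactic semigroup of an FO-definable language is aperiodic, and it is finite because the
language is regular.

Aperiodic ⇒ FO-definable. Extend the recognizing morphism to `A* → S¹`. In a finite aperiodic
monoid `M`, every language `{w | f(w) = m}` is star-free, by induction on `|M|` and then on the
alphabet (the local divisor technique of Diekert and Gastin): pick a letter `c` with
`f(c) ≠ 1` and cut a word at its first and its last `c`. The outer parts avoid `c`, and the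
middle part, read block by block between consecutive `c`'s, is a word over the local divisor
`f(c)M ∩ Mf(c)`, which is smaller than `M` because `f(c)` is not a unit. Finally, star-free
languages are FO-definable since FO is closed under Boolean operations and concatenation.
-/

section Semantics

variable {A : Type}

theorem wordList_ne_nil (w : FreeSemigroup A) : wordList w ≠ [] :=
  List.cons_ne_nil _ _

theorem wordList_length_pos (w : FreeSemigroup A) : 0 < (wordList w).length :=
  List.length_pos_of_ne_nil (wordList_ne_nil w)

theorem wordList_mul (u v : FreeSemigroup A) :
    wordList (u * v) = wordList u ++ wordList v := by
  simp [wordList, FreeSemigroup.head_mul, FreeSemigroup.tail_mul]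

theorem wordList_injective : Function.Injective (wordList (A := A)) := by
  rintro ⟨a, l⟩ ⟨b, m⟩ h
  simp_all [wordList]

theorem exists_wordList_eq {l : List A} (hl : l ≠ []) : ∃ w, wordList w = l := by
  obtain ⟨a, t, rfl⟩ := List.exists_cons_of_ne_nil hl
  exact ⟨⟨a, t⟩, rfl⟩

theorem interp_congr {w : List A} {φ : Form A} {v v' : ℕ → Fin w.length}
    (h : ∀ i ∈ φ.freeVars, v i = v' i) : Interp w φ v ↔ Interp w φ v' := by
  induction φ generalizing v v' with
  | letter a i => simp [Interp, h i (by simp [Form.freeVars])]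
  | lt i j => simp [Interp, h i (by simp [Form.freeVars]), h j (by simp [Form.freeVars])]
  | not φ ih => exact not_congr (ih h)
  | and φ ψ ihφ ihψ =>
    exact and_congr (ihφ fun i hi => h i (by simp [Form.freeVars, hi]))
      (ihψ fun i hi => h i (by simp [Form.freeVars, hi]))
  | ex n φ ih =>
    refine exists_congr fun p => ih fun i hi => ?_
    rcases eq_or_ne i n with rfl | hne
    · simp
    · simpa [hne] using h i (by simp [Form.freeVars, hi, hne])

theorem interp_iff_of_isSentence {w : List A} {φ : Form A} (hφ : IsSentence φ)
    (v v' : ℕ → Fin w.length) : Interp w φ v ↔ Interp w φ v' :=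
  interp_congr fun i hi => by simp [show φ.freeVars = ∅ from hφ] at hi

theorem models_iff_interp {w : FreeSemigroup A} {φ : Form A} (hφ : IsSentence φ)
    (v : ℕ → Fin (wordList w).length) : Models w φ ↔ Interp (wordList w) φ v :=
  ⟨fun h => h v, fun h v' => (interp_iff_of_isSentence hφ v v').mp h⟩

theorem models_not {w : FreeSemigroup A} {φ : Form A} (hφ : IsSentence φ) :
    Models w (.not φ) ↔ ¬ Models w φ := by
  let v : ℕ → Fin (wordList w).length := fun _ => ⟨0, wordList_length_pos w⟩
  rw [models_iff_interp (by simpa [IsSentence, Form.freeVars] using hφ) v,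
    models_iff_interp hφ v]
  rfl

theorem models_and {w : FreeSemigroup A} {φ ψ : Form A} :
    Models w (.and φ ψ) ↔ Models w φ ∧ Models w ψ :=
  forall_and

theorem FODefinable.compl {L : Set (FreeSemigroup A)} (h : FODefinable L) :
    FODefinable Lᶜ := by
  obtain ⟨φ, hφ, rfl⟩ := h
  refine ⟨.not φ, by simpa [IsSentence, Form.freeVars] using hφ, ?_⟩
  ext w
  exact (models_not hφ).symm

theorem FODefinable.inter {L₁ L₂ : Set (FreeSemigroup A)} (h₁ : FODefinable L₁)
    (h₂ : FODefinable L₂) : FODefinable (L₁ ∩ L₂) := by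
  obtain ⟨φ, hφ, rfl⟩ := h₁
  obtain ⟨ψ, hψ, rfl⟩ := h₂
  refine ⟨.and φ ψ, by simp_all [IsSentence, Form.freeVars], ?_⟩
  ext w
  exact models_and.symm

theorem FODefinable.union {L₁ L₂ : Set (FreeSemigroup A)} (h₁ : FODefinable L₁)
    (h₂ : FODefinable L₂) : FODefinable (L₁ ∪ L₂) := by
  rw [← compl_compl (L₁ ∪ L₂), Set.compl_union]
  exact (h₁.compl.inter h₂.compl).compl

theorem fodefinable_empty : FODefinable (∅ : Set (FreeSemigroup A)) := by
  refine ⟨.ex 0 (.lt 0 0), by simp [IsSentence, Form.freeVars], ?_⟩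
  ext w
  have : Nonempty (Fin (wordList w).length) := ⟨⟨0, wordList_length_pos w⟩⟩
  simp [LangOf, Models, Interp]

end Semantics

namespace Form

variable {A : Type}

def maxVar : Form A → ℕ
  | letter _ i => i
  | lt i j => max i j
  | not φ => φ.maxVar
  | and φ ψ => max φ.maxVar ψ.maxVar
  | ex n φ => max n φ.maxVar

def relativize (g : ℕ → Form A) : Form A → Form A
  | letter a i => letter a i
  | lt i j => lt i j
  | not φ => not (φ.relativize g)
  | and φ ψ => and (φ.relativize g) (ψ.relativize g)
  | ex n φ => ex n (and (g n) (φ.relativize g))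

theorem freeVars_relativize {g : ℕ → Form A} {x : ℕ} (hg : ∀ n, (g n).freeVars ⊆ {x, n})
    (φ : Form A) : (φ.relativize g).freeVars ⊆ insert x φ.freeVars := by
  induction φ with
  | letter a i => simp [relativize, freeVars]
  | lt i j => simp [relativize, freeVars]
  | not φ ih => exact ih
  | and φ ψ ih₁ ih₂ =>
    intro i hi
    simp only [relativize, freeVars, Finset.mem_union] at hi
    rcases hi with hi | hi
    · simpa [freeVars] using Or.imp_right Or.inl (Finset.mem_insert.mp (ih₁ hi))
    · simpa [freeVars] using Or.imp_right Or.inr (Finset.mem_insert.mp (ih₂ hi))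
  | ex n φ ih =>
    intro i hi
    simp only [relativize, freeVars, Finset.mem_sdiff, Finset.mem_union,
      Finset.mem_singleton] at hi
    obtain ⟨hi | hi, hin⟩ := hi
    · exact Finset.mem_insert.mpr (Or.inl (by simpa [hin] using hg n hi))
    · simpa [freeVars, hin] using ih hi

end Form

section Relativization

variable {A : Type}

theorem interp_relativize {g : ℕ → Form A} {x o : ℕ} {w u : List A} {px : Fin w.length}
    (hu : ∀ i < u.length, w[o + i]? = u[i]?)
    (hg : ∀ n ≠ x, ∀ τ : ℕ → Fin w.length, τ x = px →
      (Interp w (g n) τ ↔ o ≤ τ n ∧ (τ n : ℕ) < o + u.length)) :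
    ∀ φ : Form A, φ.maxVar < x → ∀ (σ : ℕ → Fin u.length) (τ : ℕ → Fin w.length),
      τ x = px → (∀ i ∈ φ.freeVars, (τ i : ℕ) = o + σ i) →
      (Interp w (φ.relativize g) τ ↔ Interp u φ σ) := by
  intro φ
  induction φ with
  | letter a i =>
    intro _ σ τ _ hστ
    have h := hu _ (σ i).isLt
    rw [← hστ i (by simp [Form.freeVars]), List.getElem?_eq_getElem (τ i).isLt,
      List.getElem?_eq_getElem (σ i).isLt, Option.some_inj] at h
    simp only [Form.relativize, Interp, List.get_eq_getElem, h]
  | lt i j =>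
    intro _ σ τ _ hστ
    simp only [Form.relativize, Interp, hστ i (by simp [Form.freeVars]),
      hστ j (by simp [Form.freeVars]), Nat.add_lt_add_iff_left]
  | not φ ih =>
    intro hx σ τ hτx hστ
    exact not_congr (ih hx σ τ hτx hστ)
  | and φ ψ ih₁ ih₂ =>
    intro hx σ τ hτx hστ
    simp only [Form.maxVar, max_lt_iff] at hx
    exact and_congr (ih₁ hx.1 σ τ hτx fun i hi => hστ i (by simp [Form.freeVars, hi]))
      (ih₂ hx.2 σ τ hτx fun i hi => hστ i (by simp [Form.freeVars, hi]))
  | ex n φ ih =>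
    intro hx σ τ hτx hστ
    simp only [Form.maxVar, max_lt_iff] at hx
    have hnx : n ≠ x := hx.1.ne
    have hτx' (p : Fin w.length) : Function.update τ n p x = px := by
      rw [Function.update_of_ne hnx.symm, hτx]
    have hupd (p : Fin w.length) (q : Fin u.length) (hpq : (p : ℕ) = o + q) :
        ∀ i ∈ φ.freeVars, (Function.update τ n p i : ℕ) = o + Function.update σ n q i := by
      intro i hi
      rcases eq_or_ne i n with rfl | hin
      · simpa using hpq
      · simpa [hin] using hστ i (by simp [Form.freeVars, hi, hin])
    simp only [Form.relativize, Interp]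
    constructor
    · rintro ⟨p, hgp, hp⟩
      rw [hg n hnx _ (hτx' p), Function.update_self] at hgp
      let q : Fin u.length := ⟨p - o, by omega⟩
      exact ⟨q, (ih hx.2 _ _ (hτx' p) (hupd p q (by simp only [q]; omega))).mp hp⟩
    · rintro ⟨q, hq⟩
      have hoq : o + q < w.length := by
        have h := hu q q.isLt
        rw [List.getElem?_eq_getElem q.isLt] at h
        exact (List.getElem?_eq_some_iff.mp h).1
      let p : Fin w.length := ⟨o + q, hoq⟩
      refine ⟨p, ?_, (ih hx.2 _ _ (hτx' p) (hupd p q rfl)).mpr hq⟩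
      rw [hg n hnx _ (hτx' p), Function.update_self]
      simp [p]

theorem interp_relativize_of_isSentence {g : ℕ → Form A} {x o : ℕ} {w u : List A}
    {px : Fin w.length} (hu : ∀ i < u.length, w[o + i]? = u[i]?)
    (hg : ∀ n ≠ x, ∀ τ : ℕ → Fin w.length, τ x = px →
      (Interp w (g n) τ ↔ o ≤ τ n ∧ (τ n : ℕ) < o + u.length))
    {φ : Form A} (hφ : IsSentence φ) (hx : φ.maxVar < x) (hu₀ : 0 < u.length)
    {τ : ℕ → Fin w.length} (hτx : τ x = px) :
    Interp w (φ.relativize g) τ ↔ ∀ σ : ℕ → Fin u.length, Interp u φ σ := by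
  have hσ (σ : ℕ → Fin u.length) := interp_relativize hu hg φ hx σ τ hτx
    (fun i hi => by simp [show φ.freeVars = ∅ from hφ] at hi)
  exact ⟨fun h σ => (hσ σ).mp h, fun h => (hσ fun _ => ⟨0, hu₀⟩).mpr (h _)⟩

end Relativization

namespace Form

variable {A : Type}

/-- The last conjunct makes the factor after position `x` nonempty. -/
def concatAt (x : ℕ) (φ ψ : Form A) : Form A :=
  ex x (and (and (φ.relativize fun n => not (lt x n)) (ψ.relativize fun n => lt x n))
    (ex (x + 1) (lt x (x + 1))))

def concat (φ ψ : Form A) : Form A := concatAt (max φ.maxVar ψ.maxVar + 1) φ ψ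

theorem isSentence_concatAt {φ ψ : Form A} (hφ : IsSentence φ) (hψ : IsSentence ψ) (x : ℕ) :
    IsSentence (concatAt x φ ψ) := by
  have h₁ := freeVars_relativize (g := fun n => not (lt x n)) (x := x)
    (fun n => by simp [freeVars]) φ
  have h₂ := freeVars_relativize (g := fun n => lt x n) (x := x) (fun n => by simp [freeVars]) ψ
  rw [show φ.freeVars = ∅ from hφ] at h₁
  rw [show ψ.freeVars = ∅ from hψ] at h₂
  refine Finset.eq_empty_of_forall_notMem fun i hi => ?_
  simp only [concatAt, freeVars, Finset.mem_sdiff, Finset.mem_union, Finset.mem_singleton,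
    Finset.mem_insert] at hi
  obtain ⟨(h | h) | ⟨h | h, hne⟩, hix⟩ := hi
  · simpa [hix] using h₁ h
  · simpa [hix] using h₂ h
  · exact hix h
  · exact hne h

end Form

section Concatenation

variable {A : Type}

theorem models_concatAt {φ ψ : Form A} (hφ : IsSentence φ) (hψ : IsSentence ψ) {x : ℕ}
    (hxφ : φ.maxVar < x) (hxψ : ψ.maxVar < x) (w : FreeSemigroup A) :
    Models w (Form.concatAt x φ ψ) ↔ ∃ k, 0 < k ∧ k < (wordList w).length ∧
      (∀ σ, Interp ((wordList w).take k) φ σ) ∧ (∀ σ, Interp ((wordList w).drop k) ψ σ) := by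
  set l := wordList w
  let τ₀ : ℕ → Fin l.length := fun _ => ⟨0, wordList_length_pos w⟩
  have hleft (p : Fin l.length) :
      Interp l (φ.relativize fun n => .not (.lt x n)) (Function.update τ₀ x p) ↔
        ∀ σ, Interp (l.take (p + 1)) φ σ := by
    refine interp_relativize_of_isSentence (o := 0) (px := p) (fun i hi => ?_) (fun n hn τ hτ => ?_)
      hφ hxφ (by simp) (Function.update_self ..)
    · rw [List.length_take] at hi
      rw [zero_add, List.getElem?_take_of_lt (by omega)]
    · simp only [Interp, hτ, List.length_take, zero_add, zero_le, true_and]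
      have := (τ n).isLt
      omega
  have hright (p : Fin l.length) (hp : (p : ℕ) + 1 < l.length) :
      Interp l (ψ.relativize fun n => .lt x n) (Function.update τ₀ x p) ↔
        ∀ σ, Interp (l.drop (p + 1)) ψ σ := by
    refine interp_relativize_of_isSentence (o := p + 1) (px := p) (fun i hi => ?_)
      (fun n hn τ hτ => ?_) hψ hxψ (by simp only [List.length_drop]; omega)
      (Function.update_self ..)
    · simp [List.getElem?_drop]
    · simp only [Interp, hτ, List.length_drop]
      have := (τ n).isLt
      omega
  rw [models_iff_interp (Form.isSentence_concatAt hφ hψ x) τ₀]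
  simp only [Form.concatAt, Interp, Function.update_self,
    Function.update_of_ne (show x ≠ x + 1 by omega)]
  constructor
  · rintro ⟨p, ⟨h₁, h₂⟩, q, hpq⟩
    have hp : (p : ℕ) + 1 < l.length := lt_of_le_of_lt hpq q.isLt
    exact ⟨p + 1, by omega, hp, (hleft p).mp h₁, (hright p hp).mp h₂⟩
  · rintro ⟨k, hk₀, hk, h₁, h₂⟩
    let p : Fin l.length := ⟨k - 1, by omega⟩
    have hpk : (p : ℕ) + 1 = k := by simp only [p]; omega
    refine ⟨p, ⟨(hleft p).mpr (hpk ▸ h₁), (hright p (by omega)).mpr (hpk ▸ h₂)⟩,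
      ⟨k, hk⟩, by simp only [p]; omega⟩

theorem mem_image_wordList_langOf {φ : Form A} {l : List A} :
    l ∈ wordList '' LangOf φ ↔ l ≠ [] ∧ ∀ σ, Interp l φ σ := by
  constructor
  · rintro ⟨w, hw, rfl⟩
    exact ⟨wordList_ne_nil w, hw⟩
  · rintro ⟨hl, h⟩
    obtain ⟨w, rfl⟩ := exists_wordList_eq hl
    exact ⟨w, h, rfl⟩

theorem mem_mul_iff_exists_split {P Q : Set (FreeSemigroup A)} {w : FreeSemigroup A} :
    w ∈ P * Q ↔ ∃ k, (wordList w).take k ∈ wordList '' P ∧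
      (wordList w).drop k ∈ wordList '' Q := by
  constructor
  · rintro ⟨u, hu, v, hv, rfl⟩
    refine ⟨(wordList u).length, ⟨u, hu, ?_⟩, ⟨v, hv, ?_⟩⟩ <;> simp [wordList_mul]
  · rintro ⟨k, ⟨u, hu, hu'⟩, ⟨v, hv, hv'⟩⟩
    refine ⟨u, hu, v, hv, wordList_injective ?_⟩
    rw [wordList_mul, hu', hv', List.take_append_drop]

theorem langOf_concat {φ ψ : Form A} (hφ : IsSentence φ) (hψ : IsSentence ψ) :
    LangOf (φ.concat ψ) = LangOf φ * LangOf ψ := by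
  ext w
  rw [mem_mul_iff_exists_split]
  simp only [mem_image_wordList_langOf, ne_eq, List.take_eq_nil_iff, List.drop_eq_nil_iff,
    not_le, not_or]
  refine (models_concatAt hφ hψ (by omega) (by omega) w).trans ⟨?_, ?_⟩
  · rintro ⟨k, hk₀, hk, h₁, h₂⟩
    exact ⟨k, ⟨⟨hk₀.ne', wordList_ne_nil w⟩, h₁⟩, hk, h₂⟩
  · rintro ⟨k, ⟨⟨hk₀, -⟩, h₁⟩, hk, h₂⟩
    exact ⟨k, Nat.pos_of_ne_zero hk₀, hk, h₁, h₂⟩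

theorem FODefinable.mul {P Q : Set (FreeSemigroup A)} (hP : FODefinable P)
    (hQ : FODefinable Q) : FODefinable (P * Q) := by
  obtain ⟨φ, hφ, rfl⟩ := hP
  obtain ⟨ψ, hψ, rfl⟩ := hQ
  exact ⟨φ.concat ψ, Form.isSentence_concatAt hφ hψ _, (langOf_concat hφ hψ).symm⟩

end Concatenation

section Letters
variable {A : Type}

theorem fodefinable_wordList_eq_singleton (a : A) :
    FODefinable {w : FreeSemigroup A | wordList w = [a]} := by
  refine ⟨.and (.not (.ex 0 (.ex 1 (.lt 0 1)))) (.not (.ex 0 (.not (.letter a 0)))),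
    by simp [IsSentence, Form.freeVars], ?_⟩
  ext ⟨b, t⟩
  simp only [LangOf, Models, Interp, wordList, List.cons.injEq, Set.mem_ofPred_eq,
    List.length_cons, ne_eq, zero_ne_one, not_false_eq_true, Function.update_of_ne,
    Function.update_self, Fin.val_fin_lt, not_exists, not_lt, List.get_eq_getElem, not_not,
    forall_const]
  constructor
  · rintro ⟨rfl, rfl⟩
    simp
  · rintro ⟨h₁, h₂⟩
    rcases t with _ | ⟨c, t⟩
    · simpa using h₂ 0
    · simpa using h₁ 0 1

end Letters

section StarFree

variable {B : Type}

inductive IsStarFree : Set (List B) → Prop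
  | empty : IsStarFree ∅
  | nil : IsStarFree {[]}
  | letter (a : B) : IsStarFree {[a]}
  | union {l m : Set (List B)} : IsStarFree l → IsStarFree m → IsStarFree (l ∪ m)
  | compl {l : Set (List B)} : IsStarFree l → IsStarFree lᶜ
  | append {l m : Set (List B)} : IsStarFree l → IsStarFree m →
      IsStarFree (Set.image2 (· ++ ·) l m)

namespace IsStarFree

theorem univ : IsStarFree (Set.univ : Set (List B)) := by
  simpa using (empty (B := B)).compl

theorem inter {l m : Set (List B)} (hl : IsStarFree l) (hm : IsStarFree m) :
    IsStarFree (l ∩ m) := by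
  simpa using (hl.compl.union hm.compl).compl

theorem diff {l m : Set (List B)} (hl : IsStarFree l) (hm : IsStarFree m) :
    IsStarFree (l \ m) :=
  hl.inter hm.compl

theorem iUnion {ι : Type} [Finite ι] {l : ι → Set (List B)} (h : ∀ i, IsStarFree (l i)) :
    IsStarFree (⋃ i, l i) := by
  classical
  cases nonempty_fintype ι
  have (s : Finset ι) : IsStarFree (⋃ i ∈ s, l i) := by
    induction s using Finset.induction_on with
    | empty => simpa using empty
    | insert i s _ ih => simpa [Finset.set_biUnion_insert] using (h i).union ih
  simpa using this Finset.univ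

end IsStarFree

def wordsOver (S : Set B) : Set (List B) := {w | ∀ a ∈ w, a ∈ S}

@[simp]
theorem mem_wordsOver {S : Set B} {w : List B} : w ∈ wordsOver S ↔ ∀ a ∈ w, a ∈ S :=
  Iff.rfl

theorem isStarFree_wordsOver [Finite B] (S : Set B) : IsStarFree (wordsOver S) := by
  have he : wordsOver S =
      (Set.image2 (· ++ ·) (Set.image2 (· ++ ·) Set.univ (⋃ a : ↥Sᶜ, {[a.1]})) Set.univ)ᶜ := by
    ext w
    simp only [mem_wordsOver, Set.mem_compl_iff, Set.mem_image2, Set.mem_univ,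
      Set.mem_iUnion, Set.mem_singleton_iff, true_and]
    constructor
    · rintro h ⟨_, ⟨s, _, ⟨a, rfl⟩, rfl⟩, t, rfl⟩
      exact a.2 (h a (by simp))
    · intro h a ha
      by_contra haS
      obtain ⟨s, t, rfl⟩ := List.append_of_mem ha
      exact h ⟨s ++ [a], ⟨s, _, ⟨⟨a, haS⟩, rfl⟩, rfl⟩, t, by simp⟩
  rw [he]
  exact ((IsStarFree.univ.append (.iUnion fun a => .letter _)).append .univ).compl

end StarFree

section StarFreeToFO

variable {A : Type}

theorem preimage_wordList_image2_append (l m : Set (List A)) :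
    wordList ⁻¹' Set.image2 (· ++ ·) l m =
      wordList ⁻¹' l * wordList ⁻¹' m ∪ {w | [] ∈ l ∧ wordList w ∈ m} ∪
        {w | [] ∈ m ∧ wordList w ∈ l} := by
  ext w
  simp only [Set.mem_preimage, Set.mem_image2, Set.mem_union, Set.mem_mul, Set.mem_ofPred_eq]
  constructor
  · rintro ⟨x, hx, y, hy, hxy⟩
    rcases eq_or_ne x [] with rfl | hx₀
    · simp_all
    rcases eq_or_ne y [] with rfl | hy₀
    · simp_all
    obtain ⟨u, rfl⟩ := exists_wordList_eq hx₀
    obtain ⟨v, rfl⟩ := exists_wordList_eq hy₀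
    exact Or.inl (Or.inl ⟨u, hx, v, hy, wordList_injective (by rw [wordList_mul, hxy])⟩)
  · rintro ((⟨u, hu, v, hv, rfl⟩ | h) | h)
    · exact ⟨_, hu, _, hv, (wordList_mul u v).symm⟩
    · exact ⟨[], h.1, _, h.2, rfl⟩
    · exact ⟨_, h.2, [], h.1, List.append_nil _⟩

theorem IsStarFree.fodefinable {K : Set (List A)} (hK : IsStarFree K) :
    FODefinable (wordList ⁻¹' K) := by
  induction hK with
  | empty => exact fodefinable_empty
  | nil => simpa [Set.preimage, wordList_ne_nil] using fodefinable_empty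
  | letter a => exact fodefinable_wordList_eq_singleton a
  | union _ _ ih ih' => exact ih.union ih'
  | compl _ ih => exact ih.compl
  | append _ _ ih ih' =>
    rw [preimage_wordList_image2_append]
    have hcase {l' m' : Set (List A)} (h : FODefinable (wordList ⁻¹' m')) :
        FODefinable {w | [] ∈ l' ∧ wordList w ∈ m'} := by
      by_cases hl : [] ∈ l'
      · convert h using 1
        ext w
        simp [hl]
      · simpa [hl] using fodefinable_empty
    exact ((ih.mul ih').union (hcase ih')).union (hcase ih)

end StarFreeToFO

section EhrenfeuchtFraisseGames

variable {A : Type}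

def IsPartialIso (w w' : List A) (ps : List (ℕ × ℕ)) : Prop :=
  ∀ pr ∈ ps, pr.1 < w.length ∧ pr.2 < w'.length ∧ w[pr.1]? = w'[pr.2]? ∧
    ∀ qr ∈ ps, (pr.1 < qr.1 ↔ pr.2 < qr.2)

/-- Duplicator wins the `k`-round Ehrenfeucht–Fraïssé game on `w` and `w'` once the pairs of
positions `ps` have been played. -/
def DuplicatorWins : ℕ → List A → List A → List (ℕ × ℕ) → Prop
  | 0, w, w', ps => IsPartialIso w w' ps
  | k + 1, w, w', ps => IsPartialIso w w' ps ∧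
      (∀ p < w.length, ∃ p' < w'.length, DuplicatorWins k w w' ((p, p') :: ps)) ∧
      (∀ p' < w'.length, ∃ p < w.length, DuplicatorWins k w w' ((p, p') :: ps))

variable {w w' : List A}

theorem IsPartialIso.mono {ps qs : List (ℕ × ℕ)} (h : IsPartialIso w w' ps) (hqs : qs ⊆ ps) :
    IsPartialIso w w' qs := fun pr hpr =>
  let ⟨h₁, h₂, h₃, h₄⟩ := h pr (hqs hpr)
  ⟨h₁, h₂, h₃, fun qr hqr => h₄ qr (hqs hqr)⟩

theorem IsPartialIso.swap {ps : List (ℕ × ℕ)} (h : IsPartialIso w w' ps) :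
    IsPartialIso w' w (ps.map Prod.swap) := by
  simp only [IsPartialIso, List.mem_map, forall_exists_index, and_imp, forall_apply_eq_imp_iff₂]
  intro pr hpr
  obtain ⟨h₁, h₂, h₃, h₄⟩ := h pr hpr
  exact ⟨h₂, h₁, h₃.symm, fun qr hqr => (h₄ qr hqr).symm⟩

theorem DuplicatorWins.isPartialIso {k : ℕ} {ps : List (ℕ × ℕ)}
    (h : DuplicatorWins k w w' ps) : IsPartialIso w w' ps := by
  cases k with
  | zero => exact h
  | succ k => exact h.1

theorem DuplicatorWins.mono {k : ℕ} {ps qs : List (ℕ × ℕ)} (h : DuplicatorWins k w w' ps)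
    (hqs : qs ⊆ ps) : DuplicatorWins k w w' qs := by
  induction k generalizing ps qs with
  | zero => exact IsPartialIso.mono h hqs
  | succ k ih =>
    obtain ⟨hc, hf, hb⟩ := h
    refine ⟨hc.mono hqs, fun p hp => ?_, fun p' hp' => ?_⟩
    · obtain ⟨p', hp', hg⟩ := hf p hp
      exact ⟨p', hp', ih hg (List.cons_subset_cons _ hqs)⟩
    · obtain ⟨p, hp, hg⟩ := hb p' hp'
      exact ⟨p, hp, ih hg (List.cons_subset_cons _ hqs)⟩

theorem DuplicatorWins.of_succ {k : ℕ} {ps : List (ℕ × ℕ)}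
    (h : DuplicatorWins (k + 1) w w' ps) : DuplicatorWins k w w' ps := by
  induction k generalizing ps with
  | zero => exact h.1
  | succ k ih =>
    obtain ⟨hc, hf, hb⟩ := h
    exact ⟨hc, fun p hp => (hf p hp).imp fun _ ⟨hp', hg⟩ => ⟨hp', ih hg⟩,
      fun p' hp' => (hb p' hp').imp fun _ ⟨hp, hg⟩ => ⟨hp, ih hg⟩⟩

theorem DuplicatorWins.swap {k : ℕ} {ps : List (ℕ × ℕ)} (h : DuplicatorWins k w w' ps) :
    DuplicatorWins k w' w (ps.map Prod.swap) := by
  induction k generalizing ps with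
  | zero => exact IsPartialIso.swap h
  | succ k ih =>
    obtain ⟨hc, hf, hb⟩ := h
    exact ⟨hc.swap, fun p' hp' => (hb p' hp').imp fun _ ⟨hp, hg⟩ => ⟨hp, ih hg⟩,
      fun p hp => (hf p hp).imp fun _ ⟨hp', hg⟩ => ⟨hp', ih hg⟩⟩

theorem duplicatorWins_refl {k : ℕ} {ps : List (ℕ × ℕ)}
    (hps : ∀ pr ∈ ps, pr.1 = pr.2 ∧ pr.1 < w.length) : DuplicatorWins k w w ps := by
  have hc : ∀ {ps : List (ℕ × ℕ)}, (∀ pr ∈ ps, pr.1 = pr.2 ∧ pr.1 < w.length) →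
      IsPartialIso w w ps := fun hps pr hpr => by
    obtain ⟨he, hb⟩ := hps pr hpr
    refine ⟨hb, he ▸ hb, by rw [he], fun qr hqr => by rw [he, (hps qr hqr).1]⟩
  induction k generalizing ps with
  | zero => exact hc hps
  | succ k ih =>
    have hcons {p : ℕ} (hp : p < w.length) : ∀ pr ∈ (p, p) :: ps, pr.1 = pr.2 ∧ pr.1 < w.length
      := by simpa [hp] using hps
    exact ⟨hc hps, fun p hp => ⟨p, hp, ih (hcons hp)⟩, fun p hp => ⟨p, hp, ih (hcons hp)⟩⟩

def shiftPairs (a b : ℕ) (qs : List (ℕ × ℕ)) : List (ℕ × ℕ) :=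
  qs.map fun pr => (pr.1 + a, pr.2 + b)

theorem IsPartialIso.append {u u' v v' : List A} {ps qs : List (ℕ × ℕ)}
    (hp : IsPartialIso u u' ps) (hq : IsPartialIso v v' qs) :
    IsPartialIso (u ++ v) (u' ++ v') (ps ++ shiftPairs u.length u'.length qs) := by
  intro pr hpr
  rcases List.mem_append.mp hpr with hin | hin
  · obtain ⟨h₁, h₂, h₃, h₄⟩ := hp pr hin
    refine ⟨by rw [List.length_append]; omega, by rw [List.length_append]; omega, ?_,
      fun qr hqr => ?_⟩
    · rwa [List.getElem?_append_left h₁, List.getElem?_append_left h₂]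
    · rcases List.mem_append.mp hqr with hin' | hin'
      · exact h₄ qr hin'
      · obtain ⟨sr, _, rfl⟩ := List.mem_map.mp hin'
        constructor <;> intro <;> omega
  · obtain ⟨sr, hsr, rfl⟩ := List.mem_map.mp hin
    obtain ⟨h₁, h₂, h₃, h₄⟩ := hq sr hsr
    refine ⟨by rw [List.length_append]; omega, by rw [List.length_append]; omega, ?_,
      fun qr hqr => ?_⟩
    · simpa [List.getElem?_append_right] using h₃
    · rcases List.mem_append.mp hqr with hin' | hin'
      · obtain ⟨b₁, b₂, _, _⟩ := hp qr hin'
        constructor <;> intro <;> omega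
      · obtain ⟨tr, htr, rfl⟩ := List.mem_map.mp hin'
        have := h₄ tr htr
        simp only
        omega

theorem DuplicatorWins.append {k : ℕ} {u u' v v' : List A} {ps qs : List (ℕ × ℕ)}
    (hu : DuplicatorWins k u u' ps) (hv : DuplicatorWins k v v' qs) :
    DuplicatorWins k (u ++ v) (u' ++ v') (ps ++ shiftPairs u.length u'.length qs) := by
  induction k generalizing ps qs with
  | zero => exact IsPartialIso.append hu hv
  | succ k ih =>
    obtain ⟨hc₁, hf₁, hb₁⟩ := hu
    obtain ⟨hc₂, hf₂, hb₂⟩ := hv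
    have hu' : DuplicatorWins (k + 1) u u' ps := ⟨hc₁, hf₁, hb₁⟩
    have hv' : DuplicatorWins (k + 1) v v' qs := ⟨hc₂, hf₂, hb₂⟩
    refine ⟨hc₁.append hc₂, fun p hp => ?_, fun p' hp' => ?_⟩
    · by_cases hpu : p < u.length
      · obtain ⟨p', hp', hg⟩ := hf₁ p hpu
        exact ⟨p', by rw [List.length_append]; omega, ih hg hv'.of_succ⟩
      · obtain ⟨i', hi', hg⟩ := hf₂ (p - u.length) (by simp only [List.length_append] at hp; omega)
        refine ⟨i' + u'.length, by rw [List.length_append]; omega,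
          (ih hu'.of_succ hg).mono ?_⟩
        have hpp : p - u.length + u.length = p := by omega
        have hq : shiftPairs u.length u'.length ((p - u.length, i') :: qs) =
            (p, i' + u'.length) :: shiftPairs u.length u'.length qs := by simp [shiftPairs, hpp]
        rw [hq]
        exact List.perm_middle.symm.subset
    · by_cases hpu : p' < u'.length
      · obtain ⟨p, hp, hg⟩ := hb₁ p' hpu
        exact ⟨p, by rw [List.length_append]; omega, ih hg hv'.of_succ⟩
      · obtain ⟨i, hi, hg⟩ := hb₂ (p' - u'.length) (by simp only [List.length_append] at hp'; omega)
        refine ⟨i + u.length, by rw [List.length_append]; omega, (ih hu'.of_succ hg).mono ?_⟩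
        have hpp : p' - u'.length + u'.length = p' := by omega
        have hq : shiftPairs u.length u'.length ((i, p' - u'.length) :: qs) =
            (i + u.length, p') :: shiftPairs u.length u'.length qs := by simp [shiftPairs, hpp]
        rw [hq]
        exact List.perm_middle.symm.subset

end EhrenfeuchtFraisseGames

section EhrenfeuchtFraisseTheorem

variable {A : Type}

theorem duplicatorWins_append_middle {k : ℕ} {x x' y y' u : List A}
    (hx : DuplicatorWins k x x' []) (hy : DuplicatorWins k y y' []) {i : ℕ} (hi : i < u.length) :
    DuplicatorWins k (x ++ u ++ y) (x' ++ u ++ y') [(x.length + i, x'.length + i)] := by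
  have hu : DuplicatorWins k u u [(i, i)] := duplicatorWins_refl (by simpa using hi)
  simpa [shiftPairs, add_comm] using (hx.append hu).append hy

theorem DuplicatorWins.context {k : ℕ} {u u' : List A} (h : DuplicatorWins k u u' [])
    (x y : List A) : DuplicatorWins k (x ++ u ++ y) (x ++ u' ++ y) [] := by
  simpa [shiftPairs] using
    ((duplicatorWins_refl (w := x) (ps := []) (by simp)).append h).append
      (duplicatorWins_refl (w := y) (ps := []) (by simp))

theorem length_flatten_replicate (n : ℕ) (u : List A) :
    (List.replicate n u).flatten.length = n * u.length := by
  simp only [List.length_flatten, List.map_replicate, List.sum_replicate, smul_eq_mul]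

theorem flatten_replicate_eq_append {u : List A} {j m : ℕ} (hj : j < m) :
    (List.replicate m u).flatten =
      (List.replicate j u).flatten ++ u ++ (List.replicate (m - 1 - j) u).flatten := by
  conv_lhs => rw [show m = j + 1 + (m - 1 - j) by omega]
  simp only [List.replicate_add, List.flatten_append, List.replicate_one, List.flatten_singleton]

/-- One round of the game on `u^m` and `u^n`: a position in the copy number `j` of `u` is
answered in a copy `j'` for which both the parts to the left and the parts to the right are
`k`-equivalent, which is possible when `m, n ≥ 3^(k+1)`. -/
theorem DuplicatorWins.exists_move_replicate {k : ℕ} {u : List A}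
    (ih : ∀ m n, 3 ^ k ≤ m → 3 ^ k ≤ n →
      DuplicatorWins k (List.replicate m u).flatten (List.replicate n u).flatten [])
    {m n : ℕ} (hm : 3 ^ (k + 1) ≤ m) (hn : 3 ^ (k + 1) ≤ n) {p : ℕ}
    (hp : p < (List.replicate m u).flatten.length) :
    ∃ p' < (List.replicate n u).flatten.length,
      DuplicatorWins k (List.replicate m u).flatten (List.replicate n u).flatten [(p, p')] := by
  have hk : 1 ≤ 3 ^ k := Nat.one_le_pow _ _ (by norm_num)
  rw [pow_succ] at hm hn
  simp only [length_flatten_replicate] at hp ⊢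
  have hu : 0 < u.length := Nat.pos_of_mul_pos_left (by omega : 0 < m * u.length)
  set j := p / u.length
  have hjm : j < m := Nat.div_lt_of_lt_mul (by rwa [mul_comm])
  have hp_eq : p = j * u.length + p % u.length := by
    rw [mul_comm]; exact (Nat.div_add_mod p u.length).symm
  have answer (j' : ℕ) (hj' : j' < n)
      (hl : DuplicatorWins k (List.replicate j u).flatten (List.replicate j' u).flatten [])
      (hr : DuplicatorWins k (List.replicate (m - 1 - j) u).flatten
        (List.replicate (n - 1 - j') u).flatten []) :
      ∃ p' < n * u.length, DuplicatorWins k (List.replicate m u).flatten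
        (List.replicate n u).flatten [(p, p')] := by
    have hmove := duplicatorWins_append_middle hl hr (Nat.mod_lt p hu)
    rw [← flatten_replicate_eq_append hjm, ← flatten_replicate_eq_append hj'] at hmove
    simp only [length_flatten_replicate, ← hp_eq] at hmove
    refine ⟨_, ?_, hmove⟩
    have := Nat.mul_le_mul_right u.length (show j' + 1 ≤ n by omega)
    have := Nat.mod_lt p hu
    rw [add_mul, one_mul] at *
    omega
  have hnil {i : ℕ} : DuplicatorWins k (List.replicate i u).flatten
      (List.replicate i u).flatten [] := duplicatorWins_refl (by simp)
  by_cases h₁ : j < 3 ^ k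
  · exact answer j (by omega) hnil (ih _ _ (by omega) (by omega))
  by_cases h₂ : m - 1 - j < 3 ^ k
  · refine answer (n - 1 - (m - 1 - j)) (by omega) (ih _ _ (by omega) (by omega)) ?_
    rw [show n - 1 - (n - 1 - (m - 1 - j)) = m - 1 - j by omega]
    exact hnil
  · exact answer (3 ^ k) (by omega) (ih _ _ (by omega) (by omega)) (ih _ _ (by omega) (by omega))

theorem duplicatorWins_replicate (k : ℕ) (u : List A) {m n : ℕ} (hm : 3 ^ k ≤ m)
    (hn : 3 ^ k ≤ n) :
    DuplicatorWins k (List.replicate m u).flatten (List.replicate n u).flatten [] := by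
  induction k generalizing m n with
  | zero => exact fun _ h => absurd h List.not_mem_nil
  | succ k ih =>
    refine ⟨fun _ h => absurd h List.not_mem_nil, fun p hp => ?_, fun p' hp' => ?_⟩
    · exact DuplicatorWins.exists_move_replicate (fun _ _ => ih) hm hn hp
    · obtain ⟨p, hp, h⟩ := DuplicatorWins.exists_move_replicate (fun _ _ => ih) hn hm hp'
      exact ⟨p, hp, by simpa using h.swap⟩

theorem interp_iff_of_duplicatorWins {w w' : List A} {k : ℕ} {ps : List (ℕ × ℕ)}
    (hg : DuplicatorWins k w w' ps) {φ : Form A} (hk : φ.rank ≤ k)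
    {v : ℕ → Fin w.length} {v' : ℕ → Fin w'.length}
    (hv : ∀ i ∈ φ.freeVars, ((v i : ℕ), (v' i : ℕ)) ∈ ps) :
    Interp w φ v ↔ Interp w' φ v' := by
  induction φ generalizing k ps v v' with
  | letter a i =>
    obtain ⟨h₁, h₂, h₃, -⟩ := hg.isPartialIso _ (hv i (by simp [Form.freeVars]))
    rw [List.getElem?_eq_getElem h₁, List.getElem?_eq_getElem h₂, Option.some_inj] at h₃
    simp only [Interp, List.get_eq_getElem, h₃]
  | lt i j =>
    exact (hg.isPartialIso _ (hv i (by simp [Form.freeVars]))).2.2.2 _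
      (hv j (by simp [Form.freeVars]))
  | not φ ih => exact not_congr (ih hg hk hv)
  | and φ ψ ih₁ ih₂ =>
    simp only [Form.rank, max_le_iff] at hk
    exact and_congr (ih₁ hg hk.1 fun i hi => hv i (by simp [Form.freeVars, hi]))
      (ih₂ hg hk.2 fun i hi => hv i (by simp [Form.freeVars, hi]))
  | ex n φ ih =>
    simp only [Form.rank] at hk
    obtain ⟨k, rfl⟩ : ∃ k', k = k' + 1 := ⟨k - 1, by omega⟩
    obtain ⟨-, hf, hb⟩ := hg
    have hupd (p : Fin w.length) (p' : Fin w'.length) : ∀ i ∈ φ.freeVars,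
        ((Function.update v n p i : ℕ), (Function.update v' n p' i : ℕ)) ∈
          ((p : ℕ), (p' : ℕ)) :: ps := by
      intro i hi
      rcases eq_or_ne i n with rfl | hin
      · simp
      · simpa [hin] using Or.inr (hv i (by simp [Form.freeVars, hi, hin]))
    constructor
    · rintro ⟨p, hp⟩
      obtain ⟨p', hp', hg'⟩ := hf p p.isLt
      exact ⟨⟨p', hp'⟩, (ih hg' (by omega) (hupd p ⟨p', hp'⟩)).mp hp⟩
    · rintro ⟨p', hp'⟩
      obtain ⟨p, hp, hg'⟩ := hb p' p'.isLt
      exact ⟨⟨p, hp⟩, (ih hg' (by omega) (hupd ⟨p, hp⟩ p')).mpr hp'⟩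

theorem forall_interp_iff_of_duplicatorWins {w w' : List A} {k : ℕ}
    (hg : DuplicatorWins k w w' []) {φ : Form A} (hφ : IsSentence φ) (hk : φ.rank ≤ k)
    (hw : w ≠ []) (hw' : w' ≠ []) :
    (∀ σ, Interp w φ σ) ↔ ∀ σ', Interp w' φ σ' := by
  have hv : ∀ {v v'}, Interp w φ v ↔ Interp w' φ v' :=
    interp_iff_of_duplicatorWins hg hk fun i hi => by simp [show φ.freeVars = ∅ from hφ] at hi
  let v : ℕ → Fin w.length := fun _ => ⟨0, List.length_pos_of_ne_nil hw⟩
  let v' : ℕ → Fin w'.length := fun _ => ⟨0, List.length_pos_of_ne_nil hw'⟩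
  exact ⟨fun h _ => hv.mp (h v), fun h _ => hv.mpr (h v')⟩

end EhrenfeuchtFraisseTheorem

section Powers

variable {M : Type} [Semigroup M]

theorem spow_add (x : M) (a b : ℕ) : spow x a * spow x b = spow x (a + b + 1) := by
  induction b with
  | zero => rfl
  | succ b ih => rw [spow, ← mul_assoc, ih]; rfl

theorem map_spow {N : Type} [Semigroup N] (f : M →ₙ* N) (x : M) (n : ℕ) :
    f (spow x n) = spow (f x) n := by
  induction n with
  | zero => rfl
  | succ n ih => rw [spow, map_mul, ih]; rfl

theorem spow_mul_eq_of_le {x : M} {N m : ℕ} (hN : spow x N * x = spow x N) (hm : N ≤ m) :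
    spow x m * x = spow x m := by
  induction m, hm using Nat.le_induction with
  | base => exact hN
  | succ m _ ih => rw [spow, ih, ih]

theorem spow_add_mul_of_idempotent {x : M} {n : ℕ} (h : spow x n * spow x n = spow x n)
    (t : ℕ) : spow x (n + t * (n + 1)) = spow x n := by
  induction t with
  | zero => simp
  | succ t ih =>
    rw [show n + (t + 1) * (n + 1) = n + t * (n + 1) + n + 1 by ring, ← spow_add, ih, h]

theorem aperiodic_of_forall_exists_spow_mul_eq (h : ∀ s : M, ∃ N, spow s N * s = spow s N) :
    Aperiodic M := by
  intro s n hn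
  obtain ⟨N, hN⟩ := h s
  rw [← spow_add_mul_of_idempotent hn N]
  exact (spow_mul_eq_of_le hN (by nlinarith)).symm

theorem exists_spow_idempotent [Finite M] (x : M) : ∃ n, spow x n * spow x n = spow x n := by
  obtain ⟨i, j, hij, he⟩ := Finite.exists_ne_map_eq_of_infinite (spow x)
  wlog hlt : i < j generalizing i j
  · exact this j i hij.symm he.symm (by omega)
  obtain ⟨d, rfl⟩ := Nat.exists_eq_add_of_lt hlt
  have hstep (t : ℕ) : spow x (i + t + (d + 1)) = spow x (i + t) := by
    induction t with
    | zero => simpa [add_assoc] using he.symm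
    | succ t ih =>
      rw [show i + (t + 1) + (d + 1) = i + t + (d + 1) + 1 by omega, ← add_assoc]
      exact congrArg (· * x) ih
  have hper (c t : ℕ) : spow x (i + t + c * (d + 1)) = spow x (i + t) := by
    induction c with
    | zero => simp
    | succ c ih => rw [show i + t + (c + 1) * (d + 1) = i + (t + c * (d + 1)) + (d + 1) by ring,
        hstep, ← add_assoc, ih]
  refine ⟨i + d * (i + 1), ?_⟩
  rw [spow_add, show i + d * (i + 1) + (i + d * (i + 1)) + 1
    = i + d * (i + 1) + (i + 1) * (d + 1) by ring, hper]

theorem Aperiodic.exists_spow_mul_eq [Finite M] (h : Aperiodic M) (s : M) :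
    ∃ N, spow s N * s = spow s N := by
  obtain ⟨n, hn⟩ := exists_spow_idempotent s
  exact ⟨n, (h s n hn).symm⟩

end Powers

section SyntacticCongruence

variable {A : Type}

theorem wordList_spow (u : FreeSemigroup A) (n : ℕ) :
    wordList (spow u n) = (List.replicate (n + 1) (wordList u)).flatten := by
  induction n with
  | zero => simp [spow]
  | succ n ih =>
    rw [spow, wordList_mul, ih]
    simp [List.replicate_succ']

theorem prod_map_wordList {S : Type} [Semigroup S] (f : FreeSemigroup A →ₙ* S)
    (w : FreeSemigroup A) :
    ((wordList w).map fun a => (f (.of a) : WithOne S)).prod = f w := by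
  obtain ⟨a, l⟩ := w
  induction l generalizing a with
  | nil => exact List.prod_singleton
  | cons b l ih =>
    have : (⟨a, b :: l⟩ : FreeSemigroup A) = .of a * ⟨b, l⟩ := rfl
    simp_all [wordList, ← WithOne.coe_mul, ← map_mul]

theorem mem_image_wordList_preimage_iff {S : Type} [Semigroup S] (f : FreeSemigroup A →ₙ* S)
    (F : Set S) (l : List A) :
    l ∈ wordList '' (f ⁻¹' F) ↔
      (l.map fun a => (f (.of a) : WithOne S)).prod ∈ ((↑) : S → WithOne S) '' F := by
  constructor
  · rintro ⟨w, hw, rfl⟩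
    exact ⟨f w, hw, (prod_map_wordList f w).symm⟩
  · rintro ⟨s, hs, he⟩
    rcases eq_or_ne l [] with rfl | hl
    · simp at he
    obtain ⟨w, rfl⟩ := exists_wordList_eq hl
    rw [prod_map_wordList, WithOne.coe_inj] at he
    exact ⟨w, by rwa [Set.mem_preimage, ← he], rfl⟩

/-- The syntactic congruence of `L`, with contexts written as lists so that they may be
empty. -/
def synCon (L : Set (FreeSemigroup A)) : Con (FreeSemigroup A) where
  r u v := ∀ x y : List A,
    x ++ wordList u ++ y ∈ wordList '' L ↔ x ++ wordList v ++ y ∈ wordList '' L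
  iseqv := ⟨fun _ _ _ => Iff.rfl, fun h x y => (h x y).symm,
    fun h₁ h₂ x y => (h₁ x y).trans (h₂ x y)⟩
  mul' := by
    intro u u' v v' hu hv x y
    have h₁ := hu x (wordList v ++ y)
    have h₂ := hv (x ++ wordList u') y
    simp only [wordList_mul, List.append_assoc] at *
    exact h₁.trans h₂

theorem preimage_image_mkMulHom_synCon (L : Set (FreeSemigroup A)) :
    (synCon L).mkMulHom ⁻¹' ((synCon L).mkMulHom '' L) = L := by
  refine subset_antisymm ?_ (Set.subset_preimage_image _ _)
  rintro w ⟨u, hu, huw⟩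
  have h := (Con.eq _).mp huw [] []
  simp only [List.nil_append, List.append_nil] at h
  obtain ⟨w', hw', hww'⟩ := h.mp ⟨u, hu, rfl⟩
  exact wordList_injective hww' ▸ hw'

theorem ker_le_synCon {S : Type} [Semigroup S] (f : FreeSemigroup A →ₙ* S) (F : Set S) :
    Con.ker f ≤ synCon (f ⁻¹' F) := by
  intro u v huv x y
  simp only [mem_image_wordList_preimage_iff, List.map_append, List.prod_append,
    prod_map_wordList, (Con.ker_rel f).mp huv]

theorem finite_quotient_synCon {S : Type} [Semigroup S] [Finite S] (f : FreeSemigroup A →ₙ* S)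
    (F : Set S) : Finite (synCon (f ⁻¹' F)).Quotient := by
  have : Finite (Quotient (Con.ker f).toSetoid) :=
    .of_equiv _ (Setoid.quotientKerEquivRange f).symm
  exact .of_surjective (Quotient.map' id fun _ _ h => ker_le_synCon f F h)
    (by rintro ⟨w⟩; exact ⟨⟦w⟧, rfl⟩)

theorem synCon_spow_mul {φ : Form A} (hφ : IsSentence φ) (u : FreeSemigroup A) :
    synCon (LangOf φ) (spow u (3 ^ φ.rank) * u) (spow u (3 ^ φ.rank)) := by
  intro x y
  have hne (n : ℕ) : x ++ (List.replicate (n + 1) (wordList u)).flatten ++ y ≠ [] := by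
    simp [wordList_ne_nil]
  rw [show spow u (3 ^ φ.rank) * u = spow u (3 ^ φ.rank + 1) from rfl,
    mem_image_wordList_langOf, mem_image_wordList_langOf, wordList_spow, wordList_spow,
    and_iff_right (hne _), and_iff_right (hne _)]
  exact forall_interp_iff_of_duplicatorWins
    ((duplicatorWins_replicate _ _ (by omega) (by omega)).context x y) hφ le_rfl (hne _) (hne _)

theorem exists_aperiodic_of_fodefinable {L : Set (FreeSemigroup A)} (hL : Regular L)
    (hfo : FODefinable L) :
    ∃ (S : Type) (_ : Semigroup S) (_ : Fintype S) (α : FreeSemigroup A →ₙ* S) (F : Set S),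
      L = ⇑α ⁻¹' F ∧ Aperiodic S := by
  obtain ⟨T, _, _, β, F, rfl⟩ := hL
  obtain ⟨φ, hφ, hβ⟩ := hfo
  have := finite_quotient_synCon β F
  refine ⟨_, inferInstance, .ofFinite _, (synCon (β ⁻¹' F)).mkMulHom, _,
    (preimage_image_mkMulHom_synCon _).symm, aperiodic_of_forall_exists_spow_mul_eq fun q => ?_⟩
  induction q using Con.induction_on with | H u => ?_
  refine ⟨3 ^ φ.rank, ?_⟩
  change spow ((synCon _).mkMulHom u) _ * (synCon _).mkMulHom u = spow ((synCon _).mkMulHom u) _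
  rw [← map_spow, ← map_mul, hβ]
  exact (Con.eq _).mpr (synCon_spow_mul hφ u)

end SyntacticCongruence

section Blocks

variable {B : Type}

/-- `blockJoin c [u₁, …, uₖ] = u₁ c u₂ c ⋯ uₖ c`. -/
def blockJoin (c : B) (us : List (List B)) : List B := (us.map (· ++ [c])).flatten

@[simp]
theorem blockJoin_nil (c : B) : blockJoin c [] = [] := rfl

@[simp]
theorem blockJoin_cons (c : B) (u : List B) (us : List (List B)) :
    blockJoin c (u :: us) = u ++ c :: blockJoin c us := by
  simp [blockJoin]

@[simp]
theorem blockJoin_append (c : B) (us vs : List (List B)) :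
    blockJoin c (us ++ vs) = blockJoin c us ++ blockJoin c vs := by
  simp [blockJoin]

theorem mem_blockJoin {c : B} {us : List (List B)} {a : B} :
    a ∈ blockJoin c us ↔ a = c ∧ us ≠ [] ∨ ∃ u ∈ us, a ∈ u := by
  induction us with
  | nil => simp
  | cons u us ih => simp only [blockJoin_cons, List.mem_append, List.mem_cons, ih]; aesop

theorem append_cons_inj_of_notMem {c : B} {u v t t' : List B} (hu : c ∉ u) (hv : c ∉ v)
    (h : u ++ c :: t = v ++ c :: t') : u = v ∧ t = t' := by
  classical
  have hlen := congrArg (List.idxOf c) h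
  simp only [List.idxOf_append_of_notMem hu, List.idxOf_append_of_notMem hv,
    List.idxOf_cons_self, add_zero] at hlen
  obtain ⟨rfl, h'⟩ := List.append_inj h hlen
  exact ⟨rfl, List.cons_injective h'⟩

theorem blockJoin_injective {c : B} {us vs : List (List B)} (hus : ∀ u ∈ us, c ∉ u)
    (hvs : ∀ v ∈ vs, c ∉ v) (h : blockJoin c us = blockJoin c vs) : us = vs := by
  induction us generalizing vs with
  | nil => cases vs <;> simp_all
  | cons u us ih =>
    cases vs with
    | nil => simp at h
    | cons v vs =>
      rw [blockJoin_cons, blockJoin_cons] at h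
      obtain ⟨rfl, h'⟩ := append_cons_inj_of_notMem (hus u (by simp)) (hvs v (by simp)) h
      rw [ih (fun x hx => hus x (by simp [hx])) (fun x hx => hvs x (by simp [hx])) h']

theorem exists_blockJoin_append (c : B) (w : List B) :
    ∃ us z, (∀ u ∈ us, c ∉ u) ∧ c ∉ z ∧ w = blockJoin c us ++ z := by
  induction w with
  | nil => exact ⟨[], [], by simp, by simp, rfl⟩
  | cons a w ih =>
    obtain ⟨us, z, hus, hz, rfl⟩ := ih
    by_cases ha : a = c
    · subst ha
      exact ⟨[] :: us, z, by simpa using hus, hz, by simp⟩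
    · cases us with
      | nil => exact ⟨[], a :: z, by simp, by simp [Ne.symm ha, hz], by simp⟩
      | cons u us => exact ⟨(a :: u) :: us, z, by simp_all [Ne.symm ha], hz, by simp⟩

end Blocks

section BlockSubstitution

variable {B M : Type} [Monoid M]

def evalLang (f : B → M) (S : Set B) (m : M) : Set (List B) :=
  {w | w ∈ wordsOver S ∧ (w.map f).prod = m}

theorem prod_map_blockJoin (f : B → M) (c : B) (us : List (List B)) :
    ((blockJoin c us).map f).prod = (us.map fun u => (u.map f).prod * f c).prod := by
  induction us <;> simp_all [mul_assoc]

/-- The words `u₁ c ⋯ uₖ c` with blocks `uᵢ` over `S` whose sequence of values lies in `K`. -/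
def blockSubst (f : B → M) (c : B) (S : Set B) (K : Set (List M)) : Set (List B) :=
  {y | ∃ us : List (List B), (∀ u ∈ us, u ∈ wordsOver S) ∧ blockJoin c us = y ∧
    us.map (fun u => (u.map f).prod) ∈ K}

variable {f : B → M} {c : B} {S : Set B}

theorem blockSubst_univ (hc : c ∉ S) :
    blockSubst f c S Set.univ = {[]} ∪ Set.image2 (· ++ ·) (wordsOver (insert c S)) {[c]} := by
  ext y
  simp only [blockSubst, Set.mem_univ, and_true, Set.mem_ofPred_eq, Set.mem_union,
    Set.mem_singleton_iff, Set.mem_image2, mem_wordsOver, Set.mem_insert_iff]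
  constructor
  · rintro ⟨us, hus, rfl⟩
    rcases List.eq_nil_or_concat us with rfl | ⟨us, u, rfl⟩
    · simp
    refine Or.inr ⟨blockJoin c us ++ u, fun a ha => ?_, [c], rfl, by simp⟩
    simp only [List.mem_append, mem_blockJoin] at ha
    aesop
  · rintro (rfl | ⟨x, hx, _, rfl, rfl⟩)
    · exact ⟨[], by simp, rfl⟩
    obtain ⟨us, z, hus, hz, rfl⟩ := exists_blockJoin_append c x
    refine ⟨us ++ [z], fun u hu a ha => ?_, by simp⟩
    have hau : a ∈ blockJoin c us ++ z := by
      simp only [List.mem_append, List.mem_singleton] at hu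
      rcases hu with hu | rfl
      · exact List.mem_append_left _ (mem_blockJoin.mpr (Or.inr ⟨u, hu, ha⟩))
      · exact List.mem_append_right _ ha
    rcases hx a hau with rfl | h
    · simp only [List.mem_append, List.mem_singleton] at hu
      rcases hu with hu | rfl
      exacts [absurd ha (hus u hu), absurd ha hz]
    · exact h

theorem blockSubst_empty : blockSubst f c S ∅ = ∅ := by
  simp [blockSubst]

theorem blockSubst_nil : blockSubst f c S {[]} = {[]} := by
  ext y
  simp only [blockSubst, Set.mem_singleton_iff, List.map_eq_nil_iff, Set.mem_ofPred_eq]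
  constructor
  · rintro ⟨us, -, rfl, rfl⟩
    rfl
  · rintro rfl
    exact ⟨[], by simp, rfl, rfl⟩

theorem blockSubst_letter (t : M) :
    blockSubst f c S {[t]} = Set.image2 (· ++ ·) (evalLang f S t) {[c]} := by
  ext y
  simp only [blockSubst, evalLang, Set.mem_singleton_iff, List.map_eq_singleton_iff,
    Set.mem_ofPred_eq, Set.mem_image2]
  constructor
  · rintro ⟨us, hus, rfl, u, rfl, rfl⟩
    exact ⟨u, ⟨hus u (by simp), rfl⟩, [c], rfl, by simp⟩
  · rintro ⟨u, ⟨hu, rfl⟩, _, rfl, rfl⟩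
    exact ⟨[u], by simpa using hu, by simp, u, rfl, rfl⟩

theorem blockSubst_union (K K' : Set (List M)) :
    blockSubst f c S (K ∪ K') = blockSubst f c S K ∪ blockSubst f c S K' := by
  ext y
  simp only [blockSubst, Set.mem_union, Set.mem_ofPred_eq]
  constructor
  · rintro ⟨us, hus, rfl, hK | hK⟩
    exacts [Or.inl ⟨us, hus, rfl, hK⟩, Or.inr ⟨us, hus, rfl, hK⟩]
  · rintro (⟨us, hus, rfl, hK⟩ | ⟨us, hus, rfl, hK⟩)
    exacts [⟨us, hus, rfl, Or.inl hK⟩, ⟨us, hus, rfl, Or.inr hK⟩]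

theorem blockSubst_compl (hc : c ∉ S) (K : Set (List M)) :
    blockSubst f c S Kᶜ = blockSubst f c S Set.univ \ blockSubst f c S K := by
  have hfree {us : List (List B)} (hus : ∀ u ∈ us, u ∈ wordsOver S) : ∀ u ∈ us, c ∉ u :=
    fun u hu hcu => hc (hus u hu c hcu)
  ext y
  simp only [blockSubst, Set.mem_compl_iff, Set.mem_univ, and_true, Set.mem_sdiff,
    Set.mem_ofPred_eq, not_exists, not_and]
  constructor
  · rintro ⟨us, hus, rfl, hK⟩
    refine ⟨⟨us, hus, rfl⟩, fun vs hvs hj => ?_⟩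
    rwa [blockJoin_injective (hfree hvs) (hfree hus) hj]
  · rintro ⟨⟨us, hus, rfl⟩, h⟩
    exact ⟨us, hus, rfl, h us hus rfl⟩

theorem blockSubst_append (K K' : Set (List M)) :
    blockSubst f c S (Set.image2 (· ++ ·) K K') =
      Set.image2 (· ++ ·) (blockSubst f c S K) (blockSubst f c S K') := by
  ext y
  simp only [blockSubst, Set.mem_image2, Set.mem_ofPred_eq]
  constructor
  · rintro ⟨us, hus, rfl, s, hs, s', hs', he⟩
    have htake : (us.take s.length).map (fun u => (u.map f).prod) = s := by
      rw [List.map_take, ← he, List.take_left]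
    have hdrop : (us.drop s.length).map (fun u => (u.map f).prod) = s' := by
      rw [List.map_drop, ← he, List.drop_left]
    refine ⟨_, ⟨us.take s.length, fun u hu => hus u (List.mem_of_mem_take hu), rfl,
      by rwa [htake]⟩, _, ⟨us.drop s.length, fun u hu => hus u (List.mem_of_mem_drop hu), rfl,
      by rwa [hdrop]⟩, by rw [← blockJoin_append, List.take_append_drop]⟩
  · rintro ⟨_, ⟨us, hus, rfl, hK⟩, _, ⟨us', hus', rfl, hK'⟩, rfl⟩
    refine ⟨us ++ us', fun u hu => ?_, blockJoin_append c us us', _, hK, _, hK', by simp⟩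
    rcases List.mem_append.mp hu with hu | hu
    exacts [hus u hu, hus' u hu]

theorem IsStarFree.blockSubst [Finite B] (hc : c ∉ S)
    (hS : ∀ t, IsStarFree (evalLang f S t)) {K : Set (List M)} (hK : IsStarFree K) :
    IsStarFree (blockSubst f c S K) := by
  induction hK with
  | empty => simpa [blockSubst_empty] using IsStarFree.empty
  | nil => simpa [blockSubst_nil] using IsStarFree.nil
  | letter t => simpa [blockSubst_letter] using (hS t).append (.letter c)
  | union _ _ ih ih' => simpa [blockSubst_union] using ih.union ih'
  | compl _ ih =>
    rw [blockSubst_compl hc, blockSubst_univ hc]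
    exact (IsStarFree.nil.union ((isStarFree_wordsOver _).append (.letter c))).diff ih
  | append _ _ ih ih' => simpa [blockSubst_append] using ih.append ih'

end BlockSubstitution

section LocalDivisors

variable {M : Type} [Monoid M]

theorem eq_one_of_mul_eq_one_of_pow_eq_pow_succ (hM : ∀ x : M, ∃ n, x ^ n = x ^ (n + 1))
    {x y : M} (h : x * y = 1) : x = 1 := by
  have hpow (n : ℕ) : x ^ n * y ^ n = 1 := by
    induction n with
    | zero => simp
    | succ n ih => rw [pow_succ, pow_succ', mul_assoc, ← mul_assoc x, h, one_mul, ih]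
  obtain ⟨n, hn⟩ := hM x
  calc x = x ^ (n + 1) * y ^ n := by rw [pow_succ', mul_assoc, hpow, mul_one]
    _ = 1 := by rw [← hn, hpow]

/-- The local divisor of `M` at `c`: the set `cM ∩ Mc` with the product `(x c) ∘ (c y) = x c y`,
whose identity is `c`. -/
def LocalDivisor (c : M) : Type := {x : M // (∃ y, c * y = x) ∧ ∃ z, z * c = x}

namespace LocalDivisor

variable {c : M}

noncomputable instance : Mul (LocalDivisor c) where
  mul x y := ⟨x.2.2.choose * y.1, by
    obtain ⟨⟨x', hx'⟩, hxc⟩ := x.2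
    obtain ⟨⟨y', hy'⟩, ⟨y'', hy''⟩⟩ := y.2
    refine ⟨⟨x' * y', ?_⟩, ⟨hxc.choose * y'', by rw [mul_assoc, hy'']⟩⟩
    rw [← hy', ← mul_assoc, ← mul_assoc, hxc.choose_spec, hx']⟩

theorem val_mul_of_mul_eq (x y : LocalDivisor c) {z : M} (hz : z * c = x.1) :
    (x * y).1 = z * y.1 := by
  obtain ⟨y', hy'⟩ := y.2.1
  change x.2.2.choose * y.1 = _
  rw [← hy', ← mul_assoc, ← mul_assoc, x.2.2.choose_spec, hz]

theorem val_mul_of_eq_mul (x y : LocalDivisor c) {y' : M} (hy' : c * y' = y.1) :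
    (x * y).1 = x.1 * y' := by
  rw [val_mul_of_mul_eq x y x.2.2.choose_spec, ← hy', ← mul_assoc, x.2.2.choose_spec]

noncomputable instance : Monoid (LocalDivisor c) where
  one := ⟨c, ⟨1, mul_one c⟩, ⟨1, one_mul c⟩⟩
  mul_assoc x y z := by
    obtain ⟨y', hy'⟩ := y.2.1
    obtain ⟨z', hz'⟩ := z.2.1
    have hyz : c * (y' * z') = (y * z).1 := by rw [val_mul_of_eq_mul y z hz', ← hy', mul_assoc]
    apply Subtype.ext
    rw [val_mul_of_eq_mul _ _ hz', val_mul_of_eq_mul _ _ hy', val_mul_of_eq_mul _ _ hyz,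
      mul_assoc]
  one_mul x := Subtype.ext (val_mul_of_mul_eq _ x (one_mul c) |>.trans (one_mul _))
  mul_one x := Subtype.ext (val_mul_of_eq_mul x _ (mul_one c) |>.trans (mul_one _))

theorem val_one : (1 : LocalDivisor c).1 = c := rfl

instance [Finite M] : Finite (LocalDivisor c) := Subtype.finite

theorem card_lt [Finite M] (hM : ∀ x : M, ∃ n, x ^ n = x ^ (n + 1)) (hc : c ≠ 1) :
    Nat.card (LocalDivisor c) < Nat.card M :=
  Finite.card_subtype_lt (x := 1) fun ⟨⟨_, hy⟩, _⟩ =>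
    hc (eq_one_of_mul_eq_one_of_pow_eq_pow_succ hM hy)

theorem exists_pow_eq_pow_succ (hM : ∀ x : M, ∃ n, x ^ n = x ^ (n + 1)) (x : LocalDivisor c) :
    ∃ n, x ^ n = x ^ (n + 1) := by
  obtain ⟨y, hy⟩ := x.2.1
  have hval (k : ℕ) : (x ^ (k + 1)).1 = x.1 * y ^ k := by
    induction k with
    | zero => simp
    | succ k ih => rw [pow_succ, val_mul_of_eq_mul _ _ hy, ih, mul_assoc, ← pow_succ]
  obtain ⟨n, hn⟩ := hM y
  exact ⟨n + 1, Subtype.ext (by rw [hval, hval, hn])⟩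

def gen (c t : M) : LocalDivisor c := ⟨c * t * c, ⟨t * c, (mul_assoc c t c).symm⟩, ⟨c * t, rfl⟩⟩

theorem val_prod_map_gen (ts : List M) :
    ((ts.map (gen c)).prod).1 = c * (ts.map (· * c)).prod := by
  induction ts with
  | nil => simp [val_one]
  | cons t ts ih =>
    rw [List.map_cons, List.prod_cons, val_mul_of_mul_eq _ _ (z := c * t) rfl, ih]
    simp [mul_assoc]

end LocalDivisor

end LocalDivisors

section AperiodicStarFree

variable {B M : Type} [Monoid M]

theorem isStarFree_evalLang_of_forall_eq_one [Finite B] {f : B → M} {S : Set B}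
    (h : ∀ a ∈ S, f a = 1) (m : M) : IsStarFree (evalLang f S m) := by
  have hone {w : List B} (hw : w ∈ wordsOver S) : (w.map f).prod = 1 :=
    List.prod_eq_one fun x hx => by
      obtain ⟨a, ha, rfl⟩ := List.mem_map.mp hx
      exact h a (hw a ha)
  by_cases hm : m = 1
  · convert isStarFree_wordsOver S using 1
    ext w
    exact ⟨fun hw => hw.1, fun hw => ⟨hw, (hone hw).trans hm.symm⟩⟩
  · convert IsStarFree.empty using 1
    ext w
    exact ⟨fun hw => hm ((hone hw.1).symm.trans hw.2).symm, False.elim⟩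

theorem val_prod_gen_blockJoin (f : B → M) (c : B) (us : List (List B)) :
    (((us.map fun u => (u.map f).prod).map (LocalDivisor.gen (f c))).prod).1 =
      f c * ((blockJoin c us).map f).prod := by
  rw [LocalDivisor.val_prod_map_gen, prod_map_blockJoin, List.map_map]
  rfl

/-- A word containing `c` is cut before its first and after its last `c`; the middle part,
read block by block, is a word over `M` evaluated in the local divisor at `f c`. -/
theorem evalLang_eq_union_localDivisor (f : B → M) {S : Set B} {c : B} (hc : c ∈ S) (m : M) :
    evalLang f S m = evalLang f (S \ {c}) m ∪
      ⋃ t : {t : M × LocalDivisor (f c) × M // t.1 * t.2.1.1 * t.2.2 = m},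
        Set.image2 (· ++ ·) (Set.image2 (· ++ ·) (Set.image2 (· ++ ·)
          (evalLang f (S \ {c}) t.1.1) {[c]})
          (blockSubst f c (S \ {c}) (evalLang (LocalDivisor.gen (f c)) Set.univ t.1.2.1)))
          (evalLang f (S \ {c}) t.1.2.2) := by
  ext w
  simp only [evalLang, blockSubst, mem_wordsOver, Set.mem_ofPred_eq, Set.mem_union,
    Set.mem_iUnion, Set.mem_image2, Set.mem_singleton_iff, Set.mem_univ, implies_true,
    true_and, Set.mem_sdiff, Subtype.exists, Prod.exists]
  constructor
  · rintro ⟨hw, rfl⟩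
    obtain ⟨us, z, hus, hz, rfl⟩ := exists_blockJoin_append c w
    have hus' : ∀ u ∈ us, ∀ a ∈ u, a ∈ S ∧ a ≠ c := fun u hu a ha =>
      ⟨hw a (by simp only [List.mem_append, mem_blockJoin]; exact Or.inl (Or.inr ⟨u, hu, ha⟩)),
        by rintro rfl; exact hus u hu ha⟩
    have hz' : ∀ a ∈ z, a ∈ S ∧ a ≠ c := fun a ha =>
      ⟨hw a (by simp [ha]), by rintro rfl; exact hz ha⟩
    rcases us with _ | ⟨u, us⟩
    · exact Or.inl ⟨by simpa using hz', by simp⟩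
    refine Or.inr ⟨_, _, _, ?_, _, ⟨_, ⟨u, ⟨fun a ha => hus' u (by simp) a ha, rfl⟩, _, rfl, rfl⟩,
      _, ⟨us, fun v hv => hus' v (by simp [hv]), rfl, rfl⟩, rfl⟩, z, ⟨hz', rfl⟩, by simp⟩
    rw [val_prod_gen_blockJoin]
    simp [mul_assoc]
  · rintro (⟨hw, rfl⟩ | ⟨t₁, x, t₂, ht, _, ⟨_, ⟨u, ⟨hu, rfl⟩, _, rfl, rfl⟩, _, ⟨us, hus, rfl, rfl⟩,
      rfl⟩, z, ⟨hz, rfl⟩, rfl⟩)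
    · exact ⟨fun a ha => (hw a ha).1, rfl⟩
    refine ⟨fun a ha => ?_, ?_⟩
    · simp only [List.append_assoc, List.cons_append, List.nil_append, List.mem_append,
        List.mem_cons, mem_blockJoin] at ha
      rcases ha with ha | rfl | (⟨rfl, -⟩ | ⟨v, hv, ha⟩) | ha
      exacts [(hu a ha).1, hc, hc, (hus v hv a ha).1, (hz a ha).1]
    · rw [← ht, val_prod_gen_blockJoin]
      simp [mul_assoc]

theorem isStarFree_evalLang [Finite M] [Finite B] (hM : ∀ x : M, ∃ n, x ^ n = x ^ (n + 1))
    (f : B → M) (S : Set B) (m : M) : IsStarFree (evalLang f S m) := by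
  induction hn : Nat.card M using Nat.strong_induction_on generalizing M B with
  | _ n ihM =>
  induction hs : S.ncard using Nat.strong_induction_on generalizing S m with
  | _ s ihS =>
  by_cases h : ∀ a ∈ S, f a = 1
  · exact isStarFree_evalLang_of_forall_eq_one h m
  push Not at h
  obtain ⟨c, hc, hfc⟩ := h
  have hS : ∀ t, IsStarFree (evalLang f (S \ {c}) t) := fun t =>
    ihS _ (hs ▸ Set.ncard_sdiff_singleton_lt_of_mem hc (Set.toFinite S)) _ t rfl
  have hD : ∀ x, IsStarFree (evalLang (LocalDivisor.gen (f c)) Set.univ x) := fun x =>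
    ihM _ (hn ▸ LocalDivisor.card_lt hM hfc) (LocalDivisor.exists_pow_eq_pow_succ hM) _ _ _ rfl
  rw [evalLang_eq_union_localDivisor f hc]
  exact (hS m).union (.iUnion fun t => (((hS _).append (.letter c)).append
    (.blockSubst (by simp) hS (hD _))).append (hS _))

end AperiodicStarFree

section AperiodicToFO

theorem coe_spow {S : Type} [Semigroup S] (s : S) (n : ℕ) :
    ((spow s n : S) : WithOne S) = (s : WithOne S) ^ (n + 1) := by
  induction n with
  | zero => simp [spow]
  | succ n ih => rw [spow, WithOne.coe_mul, ih, ← pow_succ]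

theorem Aperiodic.exists_pow_eq_pow_succ_withOne {S : Type} [Semigroup S] [Finite S]
    (hS : Aperiodic S) (x : WithOne S) : ∃ n, x ^ n = x ^ (n + 1) := by
  refine WithOne.cases_on x ⟨0, by simp⟩ fun s => ?_
  obtain ⟨N, hN⟩ := hS.exists_spow_mul_eq s
  exact ⟨N + 1, by rw [← coe_spow, ← coe_spow, ← hN]; rfl⟩

theorem fodefinable_of_aperiodic {A S : Type} [Finite A] [Semigroup S] [Finite S]
    (α : FreeSemigroup A →ₙ* S) (F : Set S) (hS : Aperiodic S) : FODefinable (α ⁻¹' F) := by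
  have : Finite (WithOne S) := inferInstanceAs (Finite (Option S))
  let f : A → WithOne S := fun a => α (.of a)
  have hK : IsStarFree (⋃ s : F, evalLang f Set.univ (s : S)) :=
    .iUnion fun s => isStarFree_evalLang hS.exists_pow_eq_pow_succ_withOne f _ _
  convert hK.fodefinable
  ext w
  simp [evalLang, f, prod_map_wordList]

end AperiodicToFO

theorem stmt7 {A : Type} [Fintype A] (L : Set (FreeSemigroup A))
    (hL : Regular L) :
    FODefinable L ↔
      ∃ (S : Type) (_ : Semigroup S) (_ : Fintype S)
        (α : FreeSemigroup A →ₙ* S) (F : Set S),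
        L = ⇑α ⁻¹' F ∧ Aperiodic S := by
  refine ⟨exists_aperiodic_of_fodefinable hL, ?_⟩
  rintro ⟨S, _, _, α, F, rfl, hS⟩
  exact fodefinable_of_aperiodic α F hS

end FOSep
end
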